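/- arXiv:math/0601237 — 4 statements merged into one kernel-verified Lean document; each statement's English description precedes it below -/
import Mathlib

section
/- Let q : ℝ × ℝ → ℝ be smooth and λ ∈ ℝ. For Q_λ(t) = (4λ + 2q(t,·))∂ₓ − qₓ(t,·) and L_λ(t) = −∂ₓ² + q(t,·) − λ, the identity q_t·ψ = [Q_λ, L_λ]ψ + 4qₓ·(L_λψ) + (q_t − 6q·qₓ + q_{xxx})·ψ holds for every smooth ψ : ℝ → ℝ. -/
/-- Partial derivative in the space variable. -/
noncomputable def pdx (f : ℝ → ℝ → ℝ) (t x : ℝ) : ℝ := deriv (f t) x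

/-- Partial derivative in the time variable. -/
noncomputable def pdt (f : ℝ → ℝ → ℝ) (t x : ℝ) : ℝ := deriv (fun s => f s x) t

/-- The first-order operator `Q_λ(t) = (4λ + 2q(t,·))∂ₓ − qₓ(t,·)`. -/
noncomputable def opQlam (q : ℝ → ℝ → ℝ) (lam t : ℝ) (ψ : ℝ → ℝ) : ℝ → ℝ :=
  fun x => (4 * lam + 2 * q t x) * deriv ψ x - pdx q t x * ψ x

/-- The operator `L_λ(t) = −∂ₓ² + q(t,·) − λ`. -/
noncomputable def opLlam (q : ℝ → ℝ → ℝ) (lam t : ℝ) (ψ : ℝ → ℝ) : ℝ → ℝ :=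
  fun x => -(deriv (deriv ψ) x) + (q t x - lam) * ψ x

/-- The KdV expression `q_t − 6 q qₓ + q_{xxx}`. -/
noncomputable def KdVexpr (q : ℝ → ℝ → ℝ) (t x : ℝ) : ℝ :=
  pdt q t x - 6 * q t x * pdx q t x + deriv (deriv (deriv (q t))) x

theorem stmt1 (q : ℝ → ℝ → ℝ) (lam : ℝ)
    (hq : ContDiff ℝ (⊤ : ℕ∞) (fun p : ℝ × ℝ => q p.1 p.2)) :
    ∀ ψ : ℝ → ℝ, ContDiff ℝ (⊤ : ℕ∞) ψ → ∀ t x : ℝ,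
      pdt q t x * ψ x =
        (opQlam q lam t (opLlam q lam t ψ) x - opLlam q lam t (opQlam q lam t ψ) x)
          + 4 * pdx q t x * opLlam q lam t ψ x + KdVexpr q t x * ψ x := by
  intro ψ hψ t x
  have hQ : ContDiff ℝ (⊤ : ℕ∞) (q t) := by
    have : ContDiff ℝ (⊤ : ℕ∞) fun y : ℝ => (t, y) := contDiff_const.prodMk contDiff_id
    exact hq.comp this
  have hQ0 : ContDiff ℝ ((⊤ : ℕ∞) : WithTop ℕ∞) (q t) := hQ.of_le (by simp)
  have hψ0 : ContDiff ℝ ((⊤ : ℕ∞) : WithTop ℕ∞) ψ := hψ.of_le (by simp)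
  have hQ1 : ContDiff ℝ ((⊤ : ℕ∞) : WithTop ℕ∞) (deriv (q t)) := (contDiff_infty_iff_deriv.mp hQ0).2
  have hQ2 : ContDiff ℝ ((⊤ : ℕ∞) : WithTop ℕ∞) (deriv (deriv (q t))) := (contDiff_infty_iff_deriv.mp hQ1).2
  have hψ1 : ContDiff ℝ ((⊤ : ℕ∞) : WithTop ℕ∞) (deriv ψ) := (contDiff_infty_iff_deriv.mp hψ0).2
  have hψ2 : ContDiff ℝ ((⊤ : ℕ∞) : WithTop ℕ∞) (deriv (deriv ψ)) := (contDiff_infty_iff_deriv.mp hψ1).2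
  -- shorthand for HasDerivAt of smooth functions
  have hd : ∀ (f : ℝ → ℝ), ContDiff ℝ ((⊤ : ℕ∞) : WithTop ℕ∞) f → ∀ y : ℝ, HasDerivAt f (deriv f y) y :=
    fun f hf y => (hf.differentiable (by simp) y).hasDerivAt
  -- derivative of (unfolded) opQlam ψ, as a function
  have dQψ : deriv (fun y => (4 * lam + 2 * q t y) * deriv ψ y - deriv (q t) y * ψ y) = fun y =>
      (2 * deriv (q t) y) * deriv ψ y + (4*lam + 2*q t y) * deriv (deriv ψ) y
        - (deriv (deriv (q t)) y * ψ y + deriv (q t) y * deriv ψ y) := by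
    funext y
    have ha : HasDerivAt (fun y => 4*lam + 2*q t y) (2 * deriv (q t) y) y := by
      simpa using ((hd _ hQ0 y).const_mul 2).const_add (4*lam)
    have h1 := ha.mul (hd _ hψ1 y)
    have h2 := (hd _ hQ1 y).mul (hd _ hψ0 y)
    exact (h1.sub h2).deriv
  -- second derivative of opQlam ψ at x
  have ddQψ : deriv (fun y =>
      (2 * deriv (q t) y) * deriv ψ y + (4*lam + 2*q t y) * deriv (deriv ψ) y
        - (deriv (deriv (q t)) y * ψ y + deriv (q t) y * deriv ψ y)) x =
      ((deriv (deriv (q t)) x * 2) * deriv ψ x + (2 * deriv (q t) x) * deriv (deriv ψ) x)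
      + ((2 * deriv (q t) x) * deriv (deriv ψ) x + (4*lam + 2*q t x) * deriv (deriv (deriv ψ)) x)
      - ((deriv (deriv (deriv (q t))) x * ψ x + deriv (deriv (q t)) x * deriv ψ x)
        + (deriv (deriv (q t)) x * deriv ψ x + deriv (q t) x * deriv (deriv ψ) x)) := by
    have h1 : HasDerivAt (fun y => (2 * deriv (q t) y) * deriv ψ y)
        ((deriv (deriv (q t)) x * 2) * deriv ψ x + (2 * deriv (q t) x) * deriv (deriv ψ) x) x := by
      have := (((hd _ hQ1 x).mul_const 2).mul (hd _ hψ1 x))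
      have e : (fun y => (2 * deriv (q t) y) * deriv ψ y) = fun y => (deriv (q t) y * 2) * deriv ψ y := by
        funext y; ring
      rw [e]
      exact this.congr_deriv (by ring)
    have ha : HasDerivAt (fun y => 4*lam + 2*q t y) (2 * deriv (q t) x) x := by
      simpa using ((hd _ hQ0 x).const_mul 2).const_add (4*lam)
    have h2 := ha.mul (hd _ hψ2 x)
    have h3 := (hd _ hQ2 x).mul (hd _ hψ0 x)
    have h4 := (hd _ hQ1 x).mul (hd _ hψ1 x)
    exact ((h1.add h2).sub (h3.add h4)).deriv
  -- derivative of (unfolded) opLlam ψ at x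
  have dLψ : deriv (fun y => -deriv (deriv ψ) y + (q t y - lam) * ψ y) x =
      -(deriv (deriv (deriv ψ)) x) + (deriv (q t) x * ψ x + (q t x - lam) * deriv ψ x) := by
    have hb : HasDerivAt (fun y => q t y - lam) (deriv (q t) x) x := (hd _ hQ0 x).sub_const lam
    have h1 := hb.mul (hd _ hψ0 x)
    exact (((hd _ hψ2 x).neg).add h1).deriv
  rw [show opLlam q lam t ψ = (fun y => -deriv (deriv ψ) y + (q t y - lam) * ψ y) from rfl,
    show opQlam q lam t ψ = (fun y => (4 * lam + 2 * q t y) * deriv ψ y - deriv (q t) y * ψ y)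
      from rfl] at *
  simp only [opQlam, opLlam, pdx, KdVexpr]
  rw [dLψ, dQψ, ddQψ]
  ring
end

section
/- Suppose q : ℝ × ℝ → ℝ is smooth, satisfies KdV (q_t − 6q qₓ + q_{xxx} = 0), and for every T > 0 there is C_T > 0 with |q(t,x)| ≤ C_T|x| for all |x| ≥ 1 and t ∈ [−T,T]. Let ψ₀ be a smooth function with −ψ₀'' + q(0,·)ψ₀ = 0, and let ψ be the (unique smooth) solution of ψ_t = 2q ψₓ − qₓ ψ with ψ(0,·) = ψ₀. Then −ψₓₓ(t,x) + q(t,x)ψ(t,x) = 0 for all (t,x). Moreover, if ψ₀ > 0 everywhere then ψ(t,x) > 0 for all (t,x). -/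
open Set Metric

noncomputable def DD (v : ℝ × ℝ) (f : ℝ × ℝ → ℝ) : ℝ × ℝ → ℝ := fun p => fderiv ℝ f p v
theorem hone : ((⊤:ℕ∞) : WithTop ℕ∞) ≠ 0 := by simp
theorem htop : ((⊤:ℕ∞) : WithTop ℕ∞) + 1 ≤ ((⊤:ℕ∞) : WithTop ℕ∞) := by norm_cast
theorem DD_contDiff {f : ℝ × ℝ → ℝ} (hf : ContDiff ℝ (⊤:ℕ∞) f) (v : ℝ × ℝ) :
    ContDiff ℝ (⊤:ℕ∞) (DD v f) :=
  (hf.fderiv_right htop).clm_apply contDiff_const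
theorem DD_add {f g : ℝ × ℝ → ℝ} {p v : ℝ × ℝ} (hf : DifferentiableAt ℝ f p)
    (hg : DifferentiableAt ℝ g p) :
    DD v (fun y => f y + g y) p = DD v f p + DD v g p := by
  simp [DD, fderiv_fun_add hf hg]
theorem DD_sub {f g : ℝ × ℝ → ℝ} {p v : ℝ × ℝ} (hf : DifferentiableAt ℝ f p)
    (hg : DifferentiableAt ℝ g p) :
    DD v (fun y => f y - g y) p = DD v f p - DD v g p := by
  simp [DD, fderiv_fun_sub hf hg]
theorem DD_neg {f : ℝ × ℝ → ℝ} {p v : ℝ × ℝ} :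
    DD v (fun y => -(f y)) p = -(DD v f p) := by
  simp [DD, fderiv_neg]
theorem DD_mul {f g : ℝ × ℝ → ℝ} {p v : ℝ × ℝ} (hf : DifferentiableAt ℝ f p)
    (hg : DifferentiableAt ℝ g p) :
    DD v (fun y => f y * g y) p = DD v f p * g p + f p * DD v g p := by
  simp [DD, fderiv_fun_mul hf hg]; ring
theorem DD_const_mul {f : ℝ × ℝ → ℝ} {p v : ℝ × ℝ} (c : ℝ) (hf : DifferentiableAt ℝ f p) :
    DD v (fun y => c * f y) p = c * DD v f p := by
  simp [DD, fderiv_const_mul hf]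
theorem DD_comm {f : ℝ × ℝ → ℝ} (hf : ContDiff ℝ (⊤:ℕ∞) f) (v w : ℝ × ℝ) (p : ℝ × ℝ) :
    DD v (DD w f) p = DD w (DD v f) p := by
  have hd : ∀ y, HasFDerivAt f (fderiv ℝ f y) y := fun y =>
    (hf.differentiable hone y).hasFDerivAt
  have h2 : HasFDerivAt (fderiv ℝ f) (fderiv ℝ (fderiv ℝ f) p) p :=
    (((hf.fderiv_right htop).differentiable hone) p).hasFDerivAt
  have hsymm := second_derivative_symmetric hd h2
  have key : ∀ u z : ℝ × ℝ, DD u (DD z f) p = fderiv ℝ (fderiv ℝ f) p u z := by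
    intro u z
    have hdiff : DifferentiableAt ℝ (fderiv ℝ f) p :=
      ((hf.fderiv_right htop).differentiable hone) p
    have h3 : fderiv ℝ (fun y => (fderiv ℝ f y) z) p
        = (fderiv ℝ f p).comp (fderiv ℝ (fun _ : ℝ × ℝ => z) p)
          + (fderiv ℝ (fderiv ℝ f) p).flip z := fderiv_clm_apply hdiff (differentiableAt_const z)
    show fderiv ℝ (fun y => (fderiv ℝ f y) z) p u = _
    rw [h3]
    simp
  rw [key, key]
  exact hsymm v w

theorem Wpde {Q Ψ : ℝ × ℝ → ℝ} (hQ : ContDiff ℝ (⊤:ℕ∞) Q) (hΨ : ContDiff ℝ (⊤:ℕ∞) Ψ)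
    (hu1 : ∀ p, DD (1,0) Ψ p = 2 * Q p * DD (0,1) Ψ p - DD (0,1) Q p * Ψ p)
    (ha1 : ∀ p, DD (1,0) Q p = 6 * Q p * DD (0,1) Q p - DD (0,1) (DD (0,1) (DD (0,1) Q)) p)
    (p : ℝ × ℝ) :
    DD (1,0) (fun y => -(DD (0,1) (DD (0,1) Ψ) y) + Q y * Ψ y) p
      = 2 * Q p * DD (0,1) (fun y => -(DD (0,1) (DD (0,1) Ψ) y) + Q y * Ψ y) p
        + (3 * DD (0,1) Q p) * (-(DD (0,1) (DD (0,1) Ψ) p) + Q p * Ψ p) := by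
  have d : ∀ {g : ℝ × ℝ → ℝ}, ContDiff ℝ (⊤:ℕ∞) g → ∀ y : ℝ × ℝ, DifferentiableAt ℝ g y :=
    fun hg y => hg.differentiable hone y
  have cU2 : ContDiff ℝ (⊤:ℕ∞) (DD (0,1) Ψ) := DD_contDiff hΨ _
  have cU22 : ContDiff ℝ (⊤:ℕ∞) (DD (0,1) (DD (0,1) Ψ)) := DD_contDiff cU2 _
  have cA2 : ContDiff ℝ (⊤:ℕ∞) (DD (0,1) Q) := DD_contDiff hQ _
  have cA22 : ContDiff ℝ (⊤:ℕ∞) (DD (0,1) (DD (0,1) Q)) := DD_contDiff cA2 _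
  have cU1 : ContDiff ℝ (⊤:ℕ∞) (DD (1,0) Ψ) := DD_contDiff hΨ _
  -- expand LHS
  have h1 : DD (1,0) (fun y => -(DD (0,1) (DD (0,1) Ψ) y) + Q y * Ψ y) p
      = DD (1,0) (fun y => -(DD (0,1) (DD (0,1) Ψ) y)) p + DD (1,0) (fun y => Q y * Ψ y) p :=
    DD_add (d cU22.neg p) (d (hQ.mul hΨ) p)
  have h2 : DD (1,0) (fun y => -(DD (0,1) (DD (0,1) Ψ) y)) p
      = -(DD (1,0) (DD (0,1) (DD (0,1) Ψ)) p) := DD_neg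
  have h3 : DD (1,0) (fun y => Q y * Ψ y) p = DD (1,0) Q p * Ψ p + Q p * DD (1,0) Ψ p :=
    DD_mul (d hQ p) (d hΨ p)
  have h4 : DD (1,0) (DD (0,1) (DD (0,1) Ψ)) p = DD (0,1) (DD (1,0) (DD (0,1) Ψ)) p :=
    DD_comm cU2 _ _ p
  have h5 : DD (1,0) (DD (0,1) Ψ) = DD (0,1) (DD (1,0) Ψ) := funext (DD_comm hΨ _ _)
  have h7 : DD (1,0) Ψ = fun y => 2 * Q y * DD (0,1) Ψ y - DD (0,1) Q y * Ψ y := funext hu1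
  -- expand DD e2 of G := 2QU2 - A2Ψ
  have h9 : DD (0,1) (fun y => 2 * Q y * DD (0,1) Ψ y - DD (0,1) Q y * Ψ y)
      = fun y => (2 * DD (0,1) Q y * DD (0,1) Ψ y + 2 * Q y * DD (0,1) (DD (0,1) Ψ) y)
          - (DD (0,1) (DD (0,1) Q) y * Ψ y + DD (0,1) Q y * DD (0,1) Ψ y) := by
    funext y
    have e1 : DD (0,1) (fun z => 2 * Q z * DD (0,1) Ψ z - DD (0,1) Q z * Ψ z) y
        = DD (0,1) (fun z => 2 * Q z * DD (0,1) Ψ z) y - DD (0,1) (fun z => DD (0,1) Q z * Ψ z) y :=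
      DD_sub (d ((contDiff_const.mul hQ).mul cU2) y) (d (cA2.mul hΨ) y)
    have e2 : DD (0,1) (fun z => 2 * Q z * DD (0,1) Ψ z) y
        = DD (0,1) (fun z => 2 * Q z) y * DD (0,1) Ψ y + 2 * Q y * DD (0,1) (DD (0,1) Ψ) y :=
      DD_mul (d (contDiff_const.mul hQ) y) (d cU2 y)
    have e3 : DD (0,1) (fun z => 2 * Q z) y = 2 * DD (0,1) Q y := DD_const_mul 2 (d hQ y)
    have e4 : DD (0,1) (fun z => DD (0,1) Q z * Ψ z) y
        = DD (0,1) (DD (0,1) Q) y * Ψ y + DD (0,1) Q y * DD (0,1) Ψ y :=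
      DD_mul (d cA2 y) (d hΨ y)
    rw [e1, e2, e3, e4]
  -- second e2 derivative of G
  have h10 : DD (0,1) (DD (0,1) (fun y => 2 * Q y * DD (0,1) Ψ y - DD (0,1) Q y * Ψ y)) p
      = 2 * Q p * DD (0,1) (DD (0,1) (DD (0,1) Ψ)) p
        + 3 * DD (0,1) Q p * DD (0,1) (DD (0,1) Ψ) p
        - DD (0,1) (DD (0,1) (DD (0,1) Q)) p * Ψ p := by
    rw [h9]
    have e1 : DD (0,1) (fun y =>
        (2 * DD (0,1) Q y * DD (0,1) Ψ y + 2 * Q y * DD (0,1) (DD (0,1) Ψ) y)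
          - (DD (0,1) (DD (0,1) Q) y * Ψ y + DD (0,1) Q y * DD (0,1) Ψ y)) p
        = DD (0,1) (fun y => 2 * DD (0,1) Q y * DD (0,1) Ψ y + 2 * Q y * DD (0,1) (DD (0,1) Ψ) y) p
          - DD (0,1) (fun y => DD (0,1) (DD (0,1) Q) y * Ψ y + DD (0,1) Q y * DD (0,1) Ψ y) p :=
      DD_sub (d (((contDiff_const.mul cA2).mul cU2).add ((contDiff_const.mul hQ).mul cU22)) p)
        (d ((cA22.mul hΨ).add (cA2.mul cU2)) p)
    have e2 : DD (0,1) (fun y => 2 * DD (0,1) Q y * DD (0,1) Ψ y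
          + 2 * Q y * DD (0,1) (DD (0,1) Ψ) y) p
        = DD (0,1) (fun y => 2 * DD (0,1) Q y * DD (0,1) Ψ y) p
          + DD (0,1) (fun y => 2 * Q y * DD (0,1) (DD (0,1) Ψ) y) p :=
      DD_add (d ((contDiff_const.mul cA2).mul cU2) p) (d ((contDiff_const.mul hQ).mul cU22) p)
    have e3 : DD (0,1) (fun y => 2 * DD (0,1) Q y * DD (0,1) Ψ y) p
        = DD (0,1) (fun y => 2 * DD (0,1) Q y) p * DD (0,1) Ψ p
          + 2 * DD (0,1) Q p * DD (0,1) (DD (0,1) Ψ) p :=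
      DD_mul (d (contDiff_const.mul cA2) p) (d cU2 p)
    have e4 : DD (0,1) (fun y => 2 * DD (0,1) Q y) p = 2 * DD (0,1) (DD (0,1) Q) p :=
      DD_const_mul 2 (d cA2 p)
    have e5 : DD (0,1) (fun y => 2 * Q y * DD (0,1) (DD (0,1) Ψ) y) p
        = DD (0,1) (fun y => 2 * Q y) p * DD (0,1) (DD (0,1) Ψ) p
          + 2 * Q p * DD (0,1) (DD (0,1) (DD (0,1) Ψ)) p :=
      DD_mul (d (contDiff_const.mul hQ) p) (d cU22 p)
    have e6 : DD (0,1) (fun y => 2 * Q y) p = 2 * DD (0,1) Q p := DD_const_mul 2 (d hQ p)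
    have e7 : DD (0,1) (fun y => DD (0,1) (DD (0,1) Q) y * Ψ y + DD (0,1) Q y * DD (0,1) Ψ y) p
        = DD (0,1) (fun y => DD (0,1) (DD (0,1) Q) y * Ψ y) p
          + DD (0,1) (fun y => DD (0,1) Q y * DD (0,1) Ψ y) p :=
      DD_add (d (cA22.mul hΨ) p) (d (cA2.mul cU2) p)
    have e8 : DD (0,1) (fun y => DD (0,1) (DD (0,1) Q) y * Ψ y) p
        = DD (0,1) (DD (0,1) (DD (0,1) Q)) p * Ψ p + DD (0,1) (DD (0,1) Q) p * DD (0,1) Ψ p :=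
      DD_mul (d cA22 p) (d hΨ p)
    have e9 : DD (0,1) (fun y => DD (0,1) Q y * DD (0,1) Ψ y) p
        = DD (0,1) (DD (0,1) Q) p * DD (0,1) Ψ p + DD (0,1) Q p * DD (0,1) (DD (0,1) Ψ) p :=
      DD_mul (d cA2 p) (d cU2 p)
    rw [e1, e2, e3, e4, e5, e6, e7, e8, e9]
    ring
  -- expand RHS second space derivative of W
  have r1 : DD (0,1) (fun y => -(DD (0,1) (DD (0,1) Ψ) y) + Q y * Ψ y) p
      = DD (0,1) (fun y => -(DD (0,1) (DD (0,1) Ψ) y)) p + DD (0,1) (fun y => Q y * Ψ y) p :=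
    DD_add (d cU22.neg p) (d (hQ.mul hΨ) p)
  have r2 : DD (0,1) (fun y => -(DD (0,1) (DD (0,1) Ψ) y)) p
      = -(DD (0,1) (DD (0,1) (DD (0,1) Ψ)) p) := DD_neg
  have r3 : DD (0,1) (fun y => Q y * Ψ y) p = DD (0,1) Q p * Ψ p + Q p * DD (0,1) Ψ p :=
    DD_mul (d hQ p) (d hΨ p)
  rw [h1, h2, h3, h4, h5, h7, h10, r1, r2, r3, ha1 p]
  beta_reduce
  ring

theorem lin_lip {α : ℝ → ℝ} {a b C : ℝ} (hC : ∀ x ∈ Icc a b, ‖α x‖ ≤ C) :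
    ∀ t, LipschitzOnWith (Real.toNNReal C) (fun z => (Icc a b).indicator α t * z)
      ((fun _ => (univ : Set ℝ)) t) := by
  intro t
  apply LipschitzWith.lipschitzOnWith
  apply LipschitzWith.of_dist_le_mul
  intro z1 z2
  simp only [Real.dist_eq, ← mul_sub, abs_mul]
  gcongr
  by_cases ht : t ∈ Icc a b
  · rw [Set.indicator_of_mem ht]
    exact le_trans (by simpa using hC t ht) (Real.le_coe_toNNReal C)
  · rw [Set.indicator_of_notMem ht]; simp

theorem lin_zero_fwd {a b : ℝ} (hab : a ≤ b) {α y : ℝ → ℝ}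
    (hα : ContinuousOn α (Icc a b)) (hy : ContinuousOn y (Icc a b))
    (hyd : ∀ t ∈ Icc a b, HasDerivWithinAt y (α t * y t) (Icc a b) t)
    (h0 : y a = 0) : ∀ t ∈ Icc a b, y t = 0 := by
  obtain ⟨C, hC⟩ := isCompact_Icc.exists_bound_of_continuousOn hα
  have key := ODE_solution_unique_of_mem_Icc_right (fun t _ => lin_lip hC t)
    hy ?_ (fun t _ => mem_univ _) continuousOn_const ?_ (fun t _ => mem_univ _) (by simpa using h0)
  · intro t ht; simpa using key ht
  · intro t ht
    have h1 : Icc a b ∈ nhdsWithin t (Ici t) := Icc_mem_nhdsGE_of_mem ht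
    have := (hyd t (Ico_subset_Icc_self ht)).mono_of_mem_nhdsWithin h1
    simpa [Set.indicator_of_mem (Ico_subset_Icc_self ht)] using this
  · intro t ht
    simpa using (hasDerivWithinAt_const t (Ici t) (0:ℝ))

theorem lin_zero_bwd {a b : ℝ} (hab : a ≤ b) {α y : ℝ → ℝ}
    (hα : ContinuousOn α (Icc a b)) (hy : ContinuousOn y (Icc a b))
    (hyd : ∀ t ∈ Icc a b, HasDerivWithinAt y (α t * y t) (Icc a b) t)
    (h0 : y b = 0) : ∀ t ∈ Icc a b, y t = 0 := by
  obtain ⟨C, hC⟩ := isCompact_Icc.exists_bound_of_continuousOn hα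
  have key := ODE_solution_unique_of_mem_Icc_left (fun t _ => lin_lip hC t)
    hy ?_ (fun t _ => mem_univ _) continuousOn_const ?_ (fun t _ => mem_univ _) (by simpa using h0)
  · intro t ht; simpa using key ht
  · intro t ht
    have h1 : Icc a b ∈ nhdsWithin t (Iic t) := Icc_mem_nhdsLE_of_mem ht
    have := (hyd t (Ioc_subset_Icc_self ht)).mono_of_mem_nhdsWithin h1
    simpa [Set.indicator_of_mem (Ioc_subset_Icc_self ht)] using this
  · intro t ht
    simpa using (hasDerivWithinAt_const t (Iic t) (0:ℝ))

theorem lin_pos_fwd {a b : ℝ} (hab : a ≤ b) {α y : ℝ → ℝ}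
    (hα : ContinuousOn α (Icc a b)) (hy : ContinuousOn y (Icc a b))
    (hyd : ∀ t ∈ Icc a b, HasDerivWithinAt y (α t * y t) (Icc a b) t)
    (h0 : 0 < y a) : 0 < y b := by
  by_contra h
  push_neg at h
  have h0' : (0:ℝ) ∈ Icc (y b) (y a) := ⟨h, le_of_lt h0⟩
  obtain ⟨c, hc, hyc⟩ := intermediate_value_Icc' hab hy h0'
  have hz := lin_zero_bwd hc.1 (hα.mono (Icc_subset_Icc_right hc.2))
    (hy.mono (Icc_subset_Icc_right hc.2))
    (fun t ht => (hyd t (Icc_subset_Icc_right hc.2 ht)).mono (Icc_subset_Icc_right hc.2)) hyc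
  exact absurd (hz a ⟨le_rfl, hc.1⟩) (ne_of_gt h0)

theorem lin_pos_bwd {a b : ℝ} (hab : a ≤ b) {α y : ℝ → ℝ}
    (hα : ContinuousOn α (Icc a b)) (hy : ContinuousOn y (Icc a b))
    (hyd : ∀ t ∈ Icc a b, HasDerivWithinAt y (α t * y t) (Icc a b) t)
    (h0 : 0 < y b) : 0 < y a := by
  by_contra h
  push_neg at h
  have h0' : (0:ℝ) ∈ Icc (y a) (y b) := ⟨h, le_of_lt h0⟩
  obtain ⟨c, hc, hyc⟩ := intermediate_value_Icc hab hy h0'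
  have hz := lin_zero_fwd hc.2 (hα.mono (Icc_subset_Icc_left hc.1))
    (hy.mono (Icc_subset_Icc_left hc.1))
    (fun t ht => (hyd t (Icc_subset_Icc_left hc.1 ht)).mono (Icc_subset_Icc_left hc.1)) hyc
  exact absurd (hz b ⟨hc.2, le_rfl⟩) (ne_of_gt h0)

theorem hasDerivAt_slice2 {F : ℝ × ℝ → ℝ} {t x : ℝ} (hF : DifferentiableAt ℝ F (t, x)) :
    HasDerivAt (fun y => F (t, y)) (DD (0, 1) F (t, x)) x := by
  have h := hF.hasFDerivAt.comp_hasDerivAt x (((hasDerivAt_const x t)).prodMk (hasDerivAt_id x))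
  exact h

theorem hasDerivAt_slice1 {F : ℝ × ℝ → ℝ} {t x : ℝ} (hF : DifferentiableAt ℝ F (t, x)) :
    HasDerivAt (fun s => F (s, x)) (DD (1, 0) F (t, x)) t := by
  have h := hF.hasFDerivAt.comp_hasDerivAt t (((hasDerivAt_id t)).prodMk (hasDerivAt_const t x))
  exact h

theorem char_exists {Q : ℝ × ℝ → ℝ} (hQ : ContDiff ℝ (⊤:ℕ∞) Q) {T M C : ℝ}
    (hT : 0 < T) (hM : 0 ≤ M) (hC : 0 < C)
    (hbound : ∀ t x : ℝ, t ∈ Icc (-T) T → |Q (t, x)| ≤ M + C * |x|)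
    {t₀ t₁ : ℝ} (ht₀ : t₀ ∈ Icc (-T) T) (ht₁ : t₁ ∈ Icc (-T) T)
    (hstep : |t₁ - t₀| ≤ min (1/(8*C)) (1/(2*(M+C)))) (x₁ : ℝ) :
    ∃ X : ℝ → ℝ, X t₁ = x₁ ∧ ∀ s ∈ Icc (min t₀ t₁) (max t₀ t₁),
      HasDerivWithinAt X (-2 * Q (s, X s)) (Icc (min t₀ t₁) (max t₀ t₁)) s := by
  set v : ℝ → ℝ → ℝ := fun s x => -2 * Q (s, x) with hv
  set R : ℝ := |x₁| + 1 with hR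
  -- interval inside [-T,T]
  have hsub : Icc (min t₀ t₁) (max t₀ t₁) ⊆ Icc (-T) T := by
    intro s hs
    constructor
    · exact le_trans (le_min ht₀.1 ht₁.1) hs.1
    · exact le_trans hs.2 (max_le ht₀.2 ht₁.2)
  -- Lipschitz constant
  have hcont2 : ContinuousOn (fun p : ℝ × ℝ => 2 * DD (0,1) Q p)
      (Icc (-T) T ×ˢ closedBall x₁ R) :=
    (continuous_const.mul (DD_contDiff hQ (0,1)).continuous).continuousOn
  obtain ⟨L0, hL0⟩ := ((isCompact_Icc.prod (isCompact_closedBall x₁ R)).exists_bound_of_continuousOn hcont2)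
  have hR0 : (0:ℝ) ≤ R := by positivity
  have hK0 : (0:ℝ) ≤ 2*(M + C*(2*|x₁|+1)) := by
    have : 0 ≤ C*(2*|x₁|+1) := mul_nonneg hC.le (by positivity)
    linarith
  have hpl : IsPicardLindelof v (tmin := min t₀ t₁) (tmax := max t₀ t₁)
      ⟨t₁, min_le_right _ _, le_max_right _ _⟩ x₁ (Real.toNNReal R) 0
      (Real.toNNReal (2*(M + C*(2*|x₁|+1)))) (Real.toNNReal L0) := by
    constructor
    · -- lipschitz
      rw [Real.coe_toNNReal _ hR0]
      intro s hs
      apply Convex.lipschitzOnWith_of_nnnorm_deriv_le (fun x _ => ?_) (fun x hx => ?_)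
        (convex_closedBall x₁ R)
      · -- differentiability of x ↦ v s x
        exact ((hQ.differentiable hone).comp
          ((differentiable_const s).prodMk differentiable_id) |>.const_mul (-2)) x
      · have hd : HasDerivAt (fun x => v s x) (-2 * DD (0,1) Q (s, x)) x := by
          have := (hasDerivAt_slice2 ((hQ.differentiable hone) (s, x))).const_mul (-2)
          simpa [hv, neg_mul] using this
        rw [hd.deriv]
        have hb := hL0 (s, x) (mem_prod.mpr ⟨hsub hs, hx⟩)
        rw [← NNReal.coe_le_coe]
        have h1 : (0:ℝ) ≤ L0 := le_trans (norm_nonneg _) hb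
        rw [Real.coe_toNNReal _ h1]
        calc ‖-2 * DD (0,1) Q (s,x)‖ = ‖2 * DD (0,1) Q (s,x)‖ := by
              rw [norm_mul, norm_mul]; norm_num
          _ ≤ L0 := hb
    · intro x _
      exact (continuous_const.mul ((hQ.continuous).comp (continuous_id.prodMk continuous_const))).continuousOn
    · rw [Real.coe_toNNReal _ hR0, Real.coe_toNNReal _ hK0]
      intro s hs x hx
      have hxb : |x| ≤ 2*|x₁| + 1 := by
        have := mem_closedBall_iff_norm.mp hx
        have h2 : |x| ≤ |x₁| + |x - x₁| := by
          calc |x| = |x₁ + (x - x₁)| := by ring_nf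
            _ ≤ |x₁| + |x - x₁| := abs_add_le _ _
        simp only [Real.norm_eq_abs] at this
        nlinarith [abs_nonneg x₁]
      have := hbound s x (hsub hs)
      have habs : |v s x| = 2 * |Q (s,x)| := by
        rw [hv]; simp [abs_mul]
      rw [Real.norm_eq_abs, habs]
      nlinarith [abs_nonneg (Q (s,x)), hC.le]
    · -- C_mul_le_R
      rw [Real.coe_toNNReal _ hR0, Real.coe_toNNReal _ hK0, NNReal.coe_zero, sub_zero]
      show 2*(M + C*(2*|x₁|+1)) * max (max t₀ t₁ - t₁) (t₁ - min t₀ t₁) ≤ R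
      have hd1 : max t₀ t₁ - t₁ ≤ |t₁ - t₀| := by
        rcases le_total t₀ t₁ with h | h
        · rw [max_eq_right h]; simpa using abs_nonneg (t₁ - t₀)
        · rw [max_eq_left h, abs_of_nonpos (by linarith)]; linarith
      have hd2 : t₁ - min t₀ t₁ ≤ |t₁ - t₀| := by
        rcases le_total t₀ t₁ with h | h
        · rw [min_eq_left h, abs_of_nonneg (by linarith)]
        · rw [min_eq_right h]; simpa using abs_nonneg (t₁ - t₀)
      have hd : max (max t₀ t₁ - t₁) (t₁ - min t₀ t₁) ≤ min (1/(8*C)) (1/(2*(M+C))) :=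
        le_trans (max_le hd1 hd2) hstep
      set d := max (max t₀ t₁ - t₁) (t₁ - min t₀ t₁) with hdd
      have hd0 : 0 ≤ d := le_trans (by simp) (le_max_left _ _)
      have he1 : d ≤ 1/(8*C) := le_trans hd (min_le_left _ _)
      have he2 : d ≤ 1/(2*(M+C)) := le_trans hd (min_le_right _ _)
      have hMC : 0 < 2*(M+C) := by linarith
      have k1 : 2*(M+C) * d ≤ 1 := by
        calc 2*(M+C)*d = d*(2*(M+C)) := by ring
          _ ≤ 1 := (le_div_iff₀ hMC).mp he2
      have k2 : 4*C*|x₁| * d ≤ |x₁| / 2 := by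
        have h8 : (0:ℝ) < 8*C := by linarith
        have : 8*C*d ≤ 1 := by
          rw [le_div_iff₀ h8] at he1; linarith
        nlinarith [abs_nonneg x₁]
      calc 2*(M + C*(2*|x₁|+1)) * d = 2*(M+C)*d + 4*C*|x₁| * d := by ring
        _ ≤ 1 + |x₁|/2 := add_le_add k1 k2
        _ ≤ R := by rw [hR]; nlinarith [abs_nonneg x₁]
  obtain ⟨X, hX1, hX2⟩ := hpl.exists_eq_forall_mem_Icc_hasDerivWithinAt₀
  exact ⟨X, hX1, hX2⟩

theorem deriv_along {F : ℝ × ℝ → ℝ} (hF : ContDiff ℝ (⊤:ℕ∞) F) {X : ℝ → ℝ} {c : ℝ}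
    {s₀ : Set ℝ} {s : ℝ} (hX : HasDerivWithinAt X c s₀ s) :
    HasDerivWithinAt (fun r => F (r, X r))
      (DD (1,0) F (s, X s) + c * DD (0,1) F (s, X s)) s₀ s := by
  have pair : HasDerivWithinAt (fun r => (r, X r)) ((1:ℝ), c) s₀ s :=
    (hasDerivWithinAt_id s s₀).prodMk hX
  have comp := ((hF.differentiable hone (s, X s)).hasFDerivAt).comp_hasDerivWithinAt s pair
  refine comp.congr_deriv ?_
  have h : ((1:ℝ), c) = (1:ℝ) • ((1:ℝ),(0:ℝ)) + c • ((0:ℝ),(1:ℝ)) := by simp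
  rw [h, map_add, map_smul, map_smul]
  simp [DD]

theorem global_prop {P : ℝ → Prop} (hP0 : P 0)
    (hstep : ∀ T : ℝ, 0 < T → ∃ ε : ℝ, 0 < ε ∧ ∀ t₀ t₁ : ℝ, t₀ ∈ Icc (-T) T →
      t₁ ∈ Icc (-T) T → |t₁ - t₀| ≤ ε → P t₀ → P t₁) : ∀ t, P t := by
  intro t
  set T := |t| + 1 with hT
  have hT0 : 0 < T := by positivity
  obtain ⟨ε, hε, hs⟩ := hstep T hT0
  have mem : ∀ s : ℝ, |s| ≤ T → s ∈ Icc (-T) T := by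
    intro s hs'
    obtain ⟨h1, h2⟩ := abs_le.mp hs'
    exact ⟨h1, h2⟩
  have claim : ∀ n : ℕ, ∀ s : ℝ, |s| ≤ T → |s| ≤ n * ε → P s := by
    intro n
    induction n with
    | zero =>
      intro s _ hs0
      norm_num at hs0
      rwa [hs0]
    | succ n ih =>
      intro s hsT hsn
      push_cast at hsn
      by_cases hc : |s| ≤ n * ε
      · exact ih s hsT hc
      · push_neg at hc
        have h0T : |(0:ℝ)| ≤ T := by simp; positivity
        rcases le_total 0 s with hpos | hneg
        · rw [abs_of_nonneg hpos] at hsT hsn hc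
          by_cases h' : s ≤ ε
          · exact hs 0 s (mem 0 h0T) (mem s (by rwa [abs_of_nonneg hpos]))
              (by rw [sub_zero, abs_of_nonneg hpos]; exact h') hP0
          · push_neg at h'
            have hnn : (0:ℝ) ≤ n * ε := by positivity
            have h1 : P (s - ε) := ih (s - ε)
              (by rw [abs_of_nonneg (by linarith)]; linarith)
              (by rw [abs_of_nonneg (by linarith)]; linarith)
            exact hs (s - ε) s (mem _ (by rw [abs_of_nonneg (by linarith)]; linarith))
              (mem s (by rwa [abs_of_nonneg hpos]))
              (by rw [show s - (s - ε) = ε by ring, abs_of_nonneg hε.le]) h1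
        · rw [abs_of_nonpos hneg] at hsT hsn hc
          by_cases h' : -ε ≤ s
          · exact hs 0 s (mem 0 h0T) (mem s (by rwa [abs_of_nonpos hneg]))
              (by rw [sub_zero, abs_of_nonpos hneg]; linarith) hP0
          · push_neg at h'
            have hnn : (0:ℝ) ≤ n * ε := by positivity
            have h1 : P (s + ε) := ih (s + ε)
              (by rw [abs_of_nonpos (by linarith)]; linarith)
              (by rw [abs_of_nonpos (by linarith)]; linarith)
            exact hs (s + ε) s (mem _ (by rw [abs_of_nonpos (by linarith)]; linarith))
              (mem s (by rwa [abs_of_nonpos hneg]))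
              (by rw [show s - (s + ε) = -ε by ring, abs_neg, abs_of_nonneg hε.le]) h1
  obtain ⟨n, hn⟩ := exists_nat_ge (|t| / ε)
  have hfin : |t| ≤ n * ε := by
    rw [div_le_iff₀ hε] at hn
    linarith
  exact claim n t (by rw [hT]; linarith) hfin


theorem step_key {Q F β : ℝ × ℝ → ℝ} (hQ : ContDiff ℝ (⊤:ℕ∞) Q) (hF : ContDiff ℝ (⊤:ℕ∞) F)
    (hβ : Continuous β)
    (hPDE : ∀ p, DD (1,0) F p = 2 * Q p * DD (0,1) F p + β p * F p)
    {T M C : ℝ} (hT : 0 < T) (hM : 0 ≤ M) (hC : 0 < C)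
    (hbound : ∀ t x : ℝ, t ∈ Icc (-T) T → |Q (t, x)| ≤ M + C * |x|)
    {t₀ t₁ : ℝ} (ht₀ : t₀ ∈ Icc (-T) T) (ht₁ : t₁ ∈ Icc (-T) T)
    (hstep : |t₁ - t₀| ≤ min (1/(8*C)) (1/(2*(M+C)))) :
    ((∀ x, F (t₀, x) = 0) → ∀ x, F (t₁, x) = 0) ∧
    ((∀ x, 0 < F (t₀, x)) → ∀ x, 0 < F (t₁, x)) := by
  have main : ∀ x₁ : ℝ, ((∀ x, F (t₀, x) = 0) → F (t₁, x₁) = 0) ∧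
      ((∀ x, 0 < F (t₀, x)) → 0 < F (t₁, x₁)) := by
    intro x₁
    obtain ⟨X, hX1, hX2⟩ := char_exists hQ hT hM hC hbound ht₀ ht₁ hstep x₁
    have hXc : ContinuousOn X (Icc (min t₀ t₁) (max t₀ t₁)) :=
      fun s hs => (hX2 s hs).continuousWithinAt
    have hyc : ContinuousOn (fun s => F (s, X s)) (Icc (min t₀ t₁) (max t₀ t₁)) :=
      (hF.continuous).comp_continuousOn ((continuousOn_id).prodMk hXc)
    have hαc : ContinuousOn (fun s => β (s, X s)) (Icc (min t₀ t₁) (max t₀ t₁)) :=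
      hβ.comp_continuousOn ((continuousOn_id).prodMk hXc)
    have hyd : ∀ s ∈ Icc (min t₀ t₁) (max t₀ t₁), HasDerivWithinAt (fun r => F (r, X r))
        ((fun s => β (s, X s)) s * (fun r => F (r, X r)) s) (Icc (min t₀ t₁) (max t₀ t₁)) s := by
      intro s hs
      have h := deriv_along hF (hX2 s hs)
      have hval : DD (1,0) F (s, X s) + (-2 * Q (s, X s)) * DD (0,1) F (s, X s)
          = β (s, X s) * F (s, X s) := by rw [hPDE (s, X s)]; ring
      exact hval ▸ h
    rcases le_total t₀ t₁ with h | h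
    · have ea : min t₀ t₁ = t₀ := min_eq_left h
      have eb : max t₀ t₁ = t₁ := max_eq_right h
      rw [ea, eb] at hyc hαc hyd
      constructor
      · intro hb
        have h0 : (fun r => F (r, X r)) t₀ = 0 := hb (X t₀)
        have hz := lin_zero_fwd h hαc hyc hyd h0 t₁ ⟨h, le_rfl⟩
        simp only [hX1] at hz
        exact hz
      · intro hb
        have h0 : 0 < (fun r => F (r, X r)) t₀ := hb (X t₀)
        have hz := lin_pos_fwd h hαc hyc hyd h0
        simp only [hX1] at hz
        exact hz
    · have ea : min t₀ t₁ = t₁ := min_eq_right h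
      have eb : max t₀ t₁ = t₀ := max_eq_left h
      rw [ea, eb] at hyc hαc hyd
      constructor
      · intro hb
        have h0 : (fun r => F (r, X r)) t₀ = 0 := hb (X t₀)
        have hz := lin_zero_bwd h hαc hyc hyd h0 t₁ ⟨le_rfl, h⟩
        simp only [hX1] at hz
        exact hz
      · intro hb
        have h0 : 0 < (fun r => F (r, X r)) t₀ := hb (X t₀)
        have hz := lin_pos_bwd h hαc hyc hyd h0
        simp only [hX1] at hz
        exact hz
  exact ⟨fun hb x => (main x).1 hb, fun hb x => (main x).2 hb⟩

theorem main_abstract {Q Ψ : ℝ × ℝ → ℝ} (hQ : ContDiff ℝ (⊤:ℕ∞) Q) (hΨ : ContDiff ℝ (⊤:ℕ∞) Ψ)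
    (hu1 : ∀ p, DD (1,0) Ψ p = 2 * Q p * DD (0,1) Ψ p - DD (0,1) Q p * Ψ p)
    (ha1 : ∀ p, DD (1,0) Q p = 6 * Q p * DD (0,1) Q p - DD (0,1) (DD (0,1) (DD (0,1) Q)) p)
    (hgrowth : ∀ T : ℝ, 0 < T → ∃ C : ℝ, 0 < C ∧
      ∀ t x : ℝ, t ∈ Icc (-T) T → 1 ≤ |x| → |Q (t, x)| ≤ C * |x|)
    (hW0 : ∀ x, -(DD (0,1) (DD (0,1) Ψ) (0, x)) + Q (0, x) * Ψ (0, x) = 0) :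
    (∀ p : ℝ × ℝ, -(DD (0,1) (DD (0,1) Ψ) p) + Q p * Ψ p = 0) ∧
    ((∀ x, 0 < Ψ (0, x)) → ∀ p : ℝ × ℝ, 0 < Ψ p) := by
  have hWc : ContDiff ℝ (⊤:ℕ∞) (fun y => -(DD (0,1) (DD (0,1) Ψ) y) + Q y * Ψ y) :=
    ((DD_contDiff (DD_contDiff hΨ _) _).neg).add (hQ.mul hΨ)
  have hWpde : ∀ p, DD (1,0) (fun y => -(DD (0,1) (DD (0,1) Ψ) y) + Q y * Ψ y) p
      = 2 * Q p * DD (0,1) (fun y => -(DD (0,1) (DD (0,1) Ψ) y) + Q y * Ψ y) p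
        + (fun p => 3 * DD (0,1) Q p) p * (fun y => -(DD (0,1) (DD (0,1) Ψ) y) + Q y * Ψ y) p :=
    fun p => Wpde hQ hΨ hu1 ha1 p
  have hΨpde : ∀ p, DD (1,0) Ψ p
      = 2 * Q p * DD (0,1) Ψ p + (fun p => -(DD (0,1) Q p)) p * Ψ p := by
    intro p; rw [hu1 p]; ring
  have hβ1 : Continuous (fun p => 3 * DD (0,1) Q p) :=
    continuous_const.mul (DD_contDiff hQ _).continuous
  have hβ2 : Continuous (fun p => -(DD (0,1) Q p)) := (DD_contDiff hQ _).continuous.neg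
  have hbounds : ∀ T : ℝ, 0 < T → ∃ M C : ℝ, 0 ≤ M ∧ 0 < C ∧
      ∀ t x : ℝ, t ∈ Icc (-T) T → |Q (t, x)| ≤ M + C * |x| := by
    intro T hT
    obtain ⟨C, hC, hCb⟩ := hgrowth T hT
    have hcomp : IsCompact (Icc (-T) T ×ˢ Icc (-1:ℝ) 1) :=
      isCompact_Icc.prod isCompact_Icc
    obtain ⟨M0, hM0⟩ := hcomp.exists_bound_of_continuousOn (hQ.continuous.continuousOn)
    refine ⟨max M0 0, C, le_max_right _ _, hC, ?_⟩
    intro t x ht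
    rcases le_total 1 |x| with h1 | h1
    · have h2 := hCb t x ht h1
      have h3 : (0:ℝ) ≤ max M0 0 := le_max_right _ _
      linarith
    · have hmem : (t, x) ∈ Icc (-T) T ×ˢ Icc (-1:ℝ) 1 := ⟨ht, abs_le.mp h1⟩
      have h2 := hM0 (t, x) hmem
      rw [Real.norm_eq_abs] at h2
      have hC0 : 0 ≤ C * |x| := by positivity
      have h3 : M0 ≤ max M0 0 := le_max_left _ _
      linarith
  have hstepall : ∀ T : ℝ, 0 < T → ∃ ε : ℝ, 0 < ε ∧ ∀ t₀ t₁ : ℝ, t₀ ∈ Icc (-T) T →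
      t₁ ∈ Icc (-T) T → |t₁ - t₀| ≤ ε →
      (((∀ x, (fun y => -(DD (0,1) (DD (0,1) Ψ) y) + Q y * Ψ y) (t₀, x) = 0) →
          ∀ x, (fun y => -(DD (0,1) (DD (0,1) Ψ) y) + Q y * Ψ y) (t₁, x) = 0) ∧
        ((∀ x, 0 < Ψ (t₀, x)) → ∀ x, 0 < Ψ (t₁, x))) := by
    intro T hT
    obtain ⟨M, C, hM, hC, hb⟩ := hbounds T hT
    have hMC : (0:ℝ) < 2*(M+C) := by linarith
    have h8C : (0:ℝ) < 8*C := by linarith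
    refine ⟨min (1/(8*C)) (1/(2*(M+C))), lt_min (by positivity) (by positivity), ?_⟩
    intro t₀ t₁ h₀ h₁ hd
    exact ⟨(step_key hQ hWc hβ1 hWpde hT hM hC hb h₀ h₁ hd).1,
      (step_key hQ hΨ hβ2 hΨpde hT hM hC hb h₀ h₁ hd).2⟩
  constructor
  · have h := global_prop (P := fun t => ∀ x,
        (fun y => -(DD (0,1) (DD (0,1) Ψ) y) + Q y * Ψ y) (t, x) = 0) hW0
      (fun T hT => (hstepall T hT).imp (fun ε hε =>
        ⟨hε.1, fun t₀ t₁ a b c => (hε.2 t₀ t₁ a b c).1⟩))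
    intro p
    exact h p.1 p.2
  · intro hpos
    have h := global_prop (P := fun t => ∀ x, 0 < Ψ (t, x)) hpos
      (fun T hT => (hstepall T hT).imp (fun ε hε =>
        ⟨hε.1, fun t₀ t₁ a b c => (hε.2 t₀ t₁ a b c).2⟩))
    intro p
    exact h p.1 p.2

theorem stmt2 (q ψ : ℝ → ℝ → ℝ) (ψ₀ : ℝ → ℝ)
    (hq : ContDiff ℝ (⊤ : ℕ∞) (fun p : ℝ × ℝ => q p.1 p.2))
    (hKdV : ∀ t x : ℝ, KdVexpr q t x = 0)
    (hgrowth : ∀ T : ℝ, 0 < T → ∃ C : ℝ, 0 < C ∧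
      ∀ t x : ℝ, t ∈ Set.Icc (-T) T → 1 ≤ |x| → |q t x| ≤ C * |x|)
    (hψ₀ : ContDiff ℝ (⊤ : ℕ∞) ψ₀)
    (hψ₀eq : ∀ x : ℝ, -(deriv (deriv ψ₀) x) + q 0 x * ψ₀ x = 0)
    (hψ : ContDiff ℝ (⊤ : ℕ∞) (fun p : ℝ × ℝ => ψ p.1 p.2))
    (hevol : ∀ t x : ℝ, pdt ψ t x = 2 * q t x * pdx ψ t x - pdx q t x * ψ t x)
    (hinit : ∀ x : ℝ, ψ 0 x = ψ₀ x) :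
    (∀ t x : ℝ, -(deriv (deriv (ψ t)) x) + q t x * ψ t x = 0) ∧
    ((∀ x : ℝ, 0 < ψ₀ x) → ∀ t x : ℝ, 0 < ψ t x) := by
  have hQ : ContDiff ℝ (⊤:ℕ∞) (fun p : ℝ × ℝ => q p.1 p.2) := hq.of_le (by simp)
  have hΨ : ContDiff ℝ (⊤:ℕ∞) (fun p : ℝ × ℝ => ψ p.1 p.2) := hψ.of_le (by simp)
  have d : ∀ {g : ℝ × ℝ → ℝ}, ContDiff ℝ (⊤:ℕ∞) g → ∀ y : ℝ × ℝ, DifferentiableAt ℝ g y :=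
    fun hg y => hg.differentiable hone y
  -- slice identities
  have eΨx : ∀ t x : ℝ, deriv (ψ t) x = DD (0,1) (fun p : ℝ × ℝ => ψ p.1 p.2) (t, x) :=
    fun t x => (hasDerivAt_slice2 (d hΨ (t, x))).deriv
  have eΨt : ∀ t x : ℝ, deriv (fun s => ψ s x) t = DD (1,0) (fun p : ℝ × ℝ => ψ p.1 p.2) (t, x) :=
    fun t x => (hasDerivAt_slice1 (d hΨ (t, x))).deriv
  have eΨd1 : ∀ t : ℝ, deriv (ψ t) = fun x => DD (0,1) (fun p : ℝ × ℝ => ψ p.1 p.2) (t, x) :=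
    fun t => funext fun x => eΨx t x
  have eΨxx : ∀ t x : ℝ, deriv (deriv (ψ t)) x
      = DD (0,1) (DD (0,1) (fun p : ℝ × ℝ => ψ p.1 p.2)) (t, x) := by
    intro t x
    rw [eΨd1 t]
    exact (hasDerivAt_slice2 (d (DD_contDiff hΨ _) (t, x))).deriv
  have eQx : ∀ t x : ℝ, deriv (q t) x = DD (0,1) (fun p : ℝ × ℝ => q p.1 p.2) (t, x) :=
    fun t x => (hasDerivAt_slice2 (d hQ (t, x))).deriv
  have eQt : ∀ t x : ℝ, deriv (fun s => q s x) t = DD (1,0) (fun p : ℝ × ℝ => q p.1 p.2) (t, x) :=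
    fun t x => (hasDerivAt_slice1 (d hQ (t, x))).deriv
  have eQd1 : ∀ t : ℝ, deriv (q t) = fun x => DD (0,1) (fun p : ℝ × ℝ => q p.1 p.2) (t, x) :=
    fun t => funext fun x => eQx t x
  have eQd2 : ∀ t : ℝ, deriv (fun x => DD (0,1) (fun p : ℝ × ℝ => q p.1 p.2) (t, x))
      = fun x => DD (0,1) (DD (0,1) (fun p : ℝ × ℝ => q p.1 p.2)) (t, x) :=
    fun t => funext fun x => (hasDerivAt_slice2 (d (DD_contDiff hQ _) (t, x))).deriv
  have eQ3 : ∀ t x : ℝ, deriv (deriv (deriv (q t))) x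
      = DD (0,1) (DD (0,1) (DD (0,1) (fun p : ℝ × ℝ => q p.1 p.2))) (t, x) := by
    intro t x
    rw [eQd1 t, eQd2 t]
    exact (hasDerivAt_slice2 (d (DD_contDiff (DD_contDiff hQ _) _) (t, x))).deriv
  -- translate evolution equation
  have hu1 : ∀ p : ℝ × ℝ, DD (1,0) (fun p : ℝ × ℝ => ψ p.1 p.2) p
      = 2 * (fun p : ℝ × ℝ => q p.1 p.2) p * DD (0,1) (fun p : ℝ × ℝ => ψ p.1 p.2) p
        - DD (0,1) (fun p : ℝ × ℝ => q p.1 p.2) p * (fun p : ℝ × ℝ => ψ p.1 p.2) p := by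
    intro p
    have h := hevol p.1 p.2
    unfold pdt pdx at h
    rw [eΨt p.1 p.2, eΨx p.1 p.2, eQx p.1 p.2] at h
    exact h
  -- translate KdV
  have ha1 : ∀ p : ℝ × ℝ, DD (1,0) (fun p : ℝ × ℝ => q p.1 p.2) p
      = 6 * (fun p : ℝ × ℝ => q p.1 p.2) p * DD (0,1) (fun p : ℝ × ℝ => q p.1 p.2) p
        - DD (0,1) (DD (0,1) (DD (0,1) (fun p : ℝ × ℝ => q p.1 p.2))) p := by
    intro p
    have h := hKdV p.1 p.2
    unfold KdVexpr pdt pdx at h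
    rw [eQt p.1 p.2, eQx p.1 p.2, eQ3 p.1 p.2] at h
    have h2 : DD (1,0) (fun p : ℝ × ℝ => q p.1 p.2) (p.1, p.2)
        = 6 * q p.1 p.2 * DD (0,1) (fun p : ℝ × ℝ => q p.1 p.2) (p.1, p.2)
          - DD (0,1) (DD (0,1) (DD (0,1) (fun p : ℝ × ℝ => q p.1 p.2))) (p.1, p.2) := by
      linarith
    exact h2
  -- initial condition for W
  have hinit' : ψ 0 = ψ₀ := funext hinit
  have hW0 : ∀ x : ℝ, -(DD (0,1) (DD (0,1) (fun p : ℝ × ℝ => ψ p.1 p.2)) (0, x))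
      + (fun p : ℝ × ℝ => q p.1 p.2) (0, x) * (fun p : ℝ × ℝ => ψ p.1 p.2) (0, x) = 0 := by
    intro x
    have h := hψ₀eq x
    rw [← hinit'] at h
    rw [eΨxx 0 x] at h
    exact h
  have hgrowth' : ∀ T : ℝ, 0 < T → ∃ C : ℝ, 0 < C ∧
      ∀ t x : ℝ, t ∈ Icc (-T) T → 1 ≤ |x| → |(fun p : ℝ × ℝ => q p.1 p.2) (t, x)| ≤ C * |x| := by
    intro T hT
    obtain ⟨C, hC, h⟩ := hgrowth T hT
    exact ⟨C, hC, fun t x ht hx => h t x ht hx⟩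
  have main := main_abstract hQ hΨ hu1 ha1 hgrowth' hW0
  constructor
  · intro t x
    have h := main.1 (t, x)
    rw [eΨxx t x]
    exact h
  · intro hpos t x
    have hp : ∀ x : ℝ, 0 < (fun p : ℝ × ℝ => ψ p.1 p.2) (0, x) := by
      intro x
      show 0 < ψ 0 x
      rw [hinit x]
      exact hpos x
    exact main.2 hp (t, x)
end

section
/- Suppose q : ℝ × ℝ → ℝ is a smooth solution of KdV with at-most-linear growth in x locally uniformly in t. Let φ, ψ be smooth solutions of u_t = 2q uₓ − qₓ u whose initial data φ(0,·), ψ(0,·) satisfy −u'' + q(0,·)u = 0. Then the Wronskian W(φ,ψ) = φψₓ − ψφₓ is constant in both t and x. -/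
open Set Metric

namespace KdVAux

/-- Directional partial derivative of a two-variable function. -/
noncomputable def pd (v : ℝ × ℝ) (F : ℝ × ℝ → ℝ) (p : ℝ × ℝ) : ℝ := fderiv ℝ F p v

noncomputable abbrev px := pd (0, 1)
noncomputable abbrev pt := pd (1, 0)

theorem hasDerivAt_slice_x {F : ℝ × ℝ → ℝ} (hF : ContDiff ℝ (⊤ : ℕ∞) F) (t x : ℝ) :
    HasDerivAt (fun y => F (t, y)) (px F (t, x)) x := by
  have h1 : HasDerivAt (fun y : ℝ => ((t, y) : ℝ × ℝ)) (0, 1) x :=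
    (hasDerivAt_const x t).prodMk (hasDerivAt_id x)
  exact ((hF.differentiable (by simp) (t, x)).hasFDerivAt.comp_hasDerivAt x h1 : _)

theorem hasDerivAt_slice_t {F : ℝ × ℝ → ℝ} (hF : ContDiff ℝ (⊤ : ℕ∞) F) (t x : ℝ) :
    HasDerivAt (fun s => F (s, x)) (pt F (t, x)) t := by
  have h1 : HasDerivAt (fun s : ℝ => ((s, x) : ℝ × ℝ)) (1, 0) t :=
    (hasDerivAt_id t).prodMk (hasDerivAt_const t x)
  exact ((hF.differentiable (by simp) (t, x)).hasFDerivAt.comp_hasDerivAt t h1 : _)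

theorem deriv_slice_x {F : ℝ × ℝ → ℝ} (hF : ContDiff ℝ (⊤ : ℕ∞) F) (t x : ℝ) :
    deriv (fun y => F (t, y)) x = px F (t, x) := (hasDerivAt_slice_x hF t x).deriv

theorem deriv_slice_t {F : ℝ × ℝ → ℝ} (hF : ContDiff ℝ (⊤ : ℕ∞) F) (t x : ℝ) :
    deriv (fun s => F (s, x)) t = pt F (t, x) := (hasDerivAt_slice_t hF t x).deriv

theorem contDiff_pd (v : ℝ × ℝ) {F : ℝ × ℝ → ℝ} (hF : ContDiff ℝ (⊤ : ℕ∞) F) :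
    ContDiff ℝ (⊤ : ℕ∞) (pd v F) := by
  have h := (hF.fderiv_right (m := (⊤ : ℕ∞)) (by simp))
  exact h.clm_apply contDiff_const

theorem pd_mul (v : ℝ × ℝ) {A B : ℝ × ℝ → ℝ} (hA : ContDiff ℝ (⊤ : ℕ∞) A) (hB : ContDiff ℝ (⊤ : ℕ∞) B)
    (p : ℝ × ℝ) : pd v (fun p => A p * B p) p = pd v A p * B p + A p * pd v B p := by
  have ha := (hA.differentiable (by simp) p).hasFDerivAt
  have hb := (hB.differentiable (by simp) p).hasFDerivAt
  have := (ha.mul hb).fderiv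
  simp only [pd]; rw [show (fun p => A p * B p) = A * B from rfl, this]
  simp [ContinuousLinearMap.add_apply, ContinuousLinearMap.smul_apply]
  ring

theorem pd_sub (v : ℝ × ℝ) {A B : ℝ × ℝ → ℝ} (hA : ContDiff ℝ (⊤ : ℕ∞) A) (hB : ContDiff ℝ (⊤ : ℕ∞) B)
    (p : ℝ × ℝ) : pd v (fun p => A p - B p) p = pd v A p - pd v B p := by
  have ha := (hA.differentiable (by simp) p).hasFDerivAt
  have hb := (hB.differentiable (by simp) p).hasFDerivAt
  have := (ha.sub hb).fderiv
  simp only [pd]; rw [show (fun p => A p - B p) = A - B from rfl, this]; rfl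

theorem pd_const_mul (v : ℝ × ℝ) (c : ℝ) {A : ℝ × ℝ → ℝ} (hA : ContDiff ℝ (⊤ : ℕ∞) A)
    (p : ℝ × ℝ) : pd v (fun p => c * A p) p = c * pd v A p := by
  have ha := (hA.differentiable (by simp) p).hasFDerivAt
  have := (ha.const_mul c).fderiv
  simp only [pd, this]; simp

/-- Clairaut: mixed partials commute for smooth functions. -/
theorem pd_comm (v w : ℝ × ℝ) {F : ℝ × ℝ → ℝ} (hF : ContDiff ℝ (⊤ : ℕ∞) F) (p : ℝ × ℝ) :
    pd w (pd v F) p = pd v (pd w F) p := by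
  have hsymm : IsSymmSndFDerivAt ℝ F p := by
    apply (hF.contDiffAt).isSymmSndFDerivAt
    rw [minSmoothness_of_isRCLikeNormedField]
    exact WithTop.coe_le_coe.mpr le_top
  have hd : DifferentiableAt ℝ (fderiv ℝ F) p :=
    ((hF.fderiv_right (m := (⊤ : ℕ∞)) (by simp)).differentiable (by simp)) p
  have key : ∀ u : ℝ × ℝ, pd u F = fun p => (fderiv ℝ F p) u := fun u => rfl
  have happ : ∀ u z : ℝ × ℝ, fderiv ℝ (fun p => (fderiv ℝ F p) u) p z
      = fderiv ℝ (fderiv ℝ F) p z u := by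
    intro u z
    rw [fderiv_clm_apply hd (differentiableAt_const u)]
    simp
  show fderiv ℝ (pd v F) p w = fderiv ℝ (pd w F) p v
  rw [key v, key w, happ v w, happ w v]
  exact hsymm w v

section
variable {Q Φ Ψ : ℝ × ℝ → ℝ}

/-- Mixed derivative of a solution of the transport equation. -/
theorem pt_px (hQ : ContDiff ℝ (⊤ : ℕ∞) Q) (hΦ : ContDiff ℝ (⊤ : ℕ∞) Φ)
    (hΦe : ∀ p, pt Φ p = 2 * Q p * px Φ p - px Q p * Φ p) (p : ℝ × ℝ) :
    pt (px Φ) p = 2 * px Q p * px Φ p + 2 * Q p * px (px Φ) p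
      - (px (px Q) p * Φ p + px Q p * px Φ p) := by
  have hpxΦ := contDiff_pd (0,1) hΦ
  have hpxQ := contDiff_pd (0,1) hQ
  have h1 : pt (px Φ) p = px (pt Φ) p := pd_comm _ _ hΦ p
  have h2 : pt Φ = fun p => 2 * Q p * px Φ p - px Q p * Φ p := funext fun p => hΦe p
  have e1 : px (fun p => 2 * Q p * px Φ p - px Q p * Φ p) p
      = px (fun p => 2 * Q p * px Φ p) p - px (fun p => px Q p * Φ p) p :=
    pd_sub _ ((contDiff_const.mul hQ).mul hpxΦ) (hpxQ.mul hΦ) p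
  have e2 : px (fun p => 2 * Q p * px Φ p) p
      = px (fun p => 2 * Q p) p * px Φ p + (2 * Q p) * px (px Φ) p :=
    pd_mul _ (contDiff_const.mul hQ) hpxΦ p
  have e3 : px (fun p => 2 * Q p) p = 2 * px Q p := pd_const_mul _ _ hQ p
  have e4 : px (fun p => px Q p * Φ p) p = px (px Q) p * Φ p + px Q p * px Φ p :=
    pd_mul _ hpxQ hΦ p
  rw [h1, h2, e1, e2, e3, e4]

/-- The Wronskian satisfies the transport equation `W_t = 2 q W_x`. -/
theorem wronskian_transport (hQ : ContDiff ℝ (⊤ : ℕ∞) Q) (hΦ : ContDiff ℝ (⊤ : ℕ∞) Φ) (hΨ : ContDiff ℝ (⊤ : ℕ∞) Ψ)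
    (hΦe : ∀ p, pt Φ p = 2 * Q p * px Φ p - px Q p * Φ p)
    (hΨe : ∀ p, pt Ψ p = 2 * Q p * px Ψ p - px Q p * Ψ p) (p : ℝ × ℝ) :
    (px (fun p => Φ p * px Ψ p - Ψ p * px Φ p) p
        = Φ p * px (px Ψ) p - Ψ p * px (px Φ) p) ∧
    pt (fun p => Φ p * px Ψ p - Ψ p * px Φ p) p
        = 2 * Q p * (Φ p * px (px Ψ) p - Ψ p * px (px Φ) p) := by
  have hpxΦ := contDiff_pd (0,1) hΦ
  have hpxΨ := contDiff_pd (0,1) hΨ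
  have ex : ∀ v : ℝ × ℝ, pd v (fun p => Φ p * px Ψ p - Ψ p * px Φ p) p
      = pd v Φ p * px Ψ p + Φ p * pd v (px Ψ) p
        - (pd v Ψ p * px Φ p + Ψ p * pd v (px Φ) p) := by
    intro v
    have e1 : pd v (fun p => Φ p * px Ψ p - Ψ p * px Φ p) p
        = pd v (fun p => Φ p * px Ψ p) p - pd v (fun p => Ψ p * px Φ p) p :=
      pd_sub _ (hΦ.mul hpxΨ) (hΨ.mul hpxΦ) p
    rw [e1, pd_mul _ hΦ hpxΨ p, pd_mul _ hΨ hpxΦ p]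
  have hxx : px (px Ψ) p * px Φ p - px (px Φ) p * px Ψ p
      = px (px Ψ) p * px Φ p - px (px Φ) p * px Ψ p := rfl
  constructor
  · show pd (0,1) (fun p => Φ p * px Ψ p - Ψ p * px Φ p) p = _
    rw [ex (0,1)]; ring
  · show pd (1,0) (fun p => Φ p * px Ψ p - Ψ p * px Φ p) p = _
    rw [ex (1,0)]
    have h1 : pd (1,0) (px Φ) p = pt (px Φ) p := rfl
    have h2 : pd (1,0) (px Ψ) p = pt (px Ψ) p := rfl
    have h3 : pd (1,0) Φ p = pt Φ p := rfl
    have h4 : pd (1,0) Ψ p = pt Ψ p := rfl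
    rw [h1, h2, h3, h4, pt_px hQ hΦ hΦe p, pt_px hQ hΨ hΨe p, hΦe p, hΨe p]
    ring

end
section
variable {Q Φ Ψ : ℝ × ℝ → ℝ}

theorem deriv2_slice {F : ℝ × ℝ → ℝ} (hF : ContDiff ℝ (⊤ : ℕ∞) F) (t x : ℝ) :
    deriv (deriv (fun y => F (t, y))) x = px (px F) (t, x) := by
  have h1 : deriv (fun y => F (t, y)) = fun y => px F (t, y) :=
    funext fun y => deriv_slice_x hF t y
  rw [h1, deriv_slice_x (contDiff_pd _ hF) t x]

/-- If the initial data satisfy the Schrödinger equation, the Wronskian is constant at `t = 0`. -/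
theorem wronskian_const_at_zero (hQ : ContDiff ℝ (⊤ : ℕ∞) Q) (hΦ : ContDiff ℝ (⊤ : ℕ∞) Φ)
    (hΨ : ContDiff ℝ (⊤ : ℕ∞) Ψ)
    (hΦ₀ : ∀ x : ℝ, -(deriv (deriv (fun y => Φ (0, y))) x) + Q (0, x) * Φ (0, x) = 0)
    (hΨ₀ : ∀ x : ℝ, -(deriv (deriv (fun y => Ψ (0, y))) x) + Q (0, x) * Ψ (0, x) = 0)
    (hpxW : ∀ p, px (fun p => Φ p * px Ψ p - Ψ p * px Φ p) p
        = Φ p * px (px Ψ) p - Ψ p * px (px Φ) p)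
    (x : ℝ) :
    Φ (0, x) * px Ψ (0, x) - Ψ (0, x) * px Φ (0, x)
      = Φ (0, 0) * px Ψ (0, 0) - Ψ (0, 0) * px Φ (0, 0) := by
  set W : ℝ × ℝ → ℝ := fun p => Φ p * px Ψ p - Ψ p * px Φ p with hWdef
  have hW : ContDiff ℝ (⊤ : ℕ∞) W := (hΦ.mul (contDiff_pd _ hΨ)).sub (hΨ.mul (contDiff_pd _ hΦ))
  have hd : ∀ y : ℝ, HasDerivAt (fun y => W (0, y)) 0 y := by
    intro y
    have h := hasDerivAt_slice_x hW 0 y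
    have h0 : px W (0, y) = 0 := by
      have e1 := hpxW (0, y)
      have e2 : px (px Φ) (0, y) = Q (0, y) * Φ (0, y) := by
        have := hΦ₀ y
        rw [deriv2_slice hΦ 0 y] at this; linarith
      have e3 : px (px Ψ) (0, y) = Q (0, y) * Ψ (0, y) := by
        have := hΨ₀ y
        rw [deriv2_slice hΨ 0 y] at this; linarith
      rw [e1, e2, e3]; ring
    rw [h0] at h; exact h
  have hconst := is_const_of_deriv_eq_zero (fun y => (hd y).differentiableAt)
    (fun y => (hd y).deriv)
  exact hconst x 0

/-- Linear growth bound for `q` on a compact time interval. -/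
theorem linear_growth {q : ℝ → ℝ → ℝ} (hq : ContDiff ℝ (⊤ : ℕ∞) (fun p : ℝ × ℝ => q p.1 p.2))
    (hgrowth : ∀ T : ℝ, 0 < T → ∃ C : ℝ, 0 < C ∧
      ∀ t x : ℝ, t ∈ Set.Icc (-T) T → 1 ≤ |x| → |q t x| ≤ C * |x|)
    (T : ℝ) (hT : 0 < T) :
    ∃ K : ℝ, 0 < K ∧ ∀ t ∈ Icc (-T) T, ∀ x : ℝ, |q t x| ≤ K * (1 + |x|) := by
  obtain ⟨C, hC, hCb⟩ := hgrowth T hT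
  have hcomp : IsCompact ((Icc (-T) T) ×ˢ (Icc (-1 : ℝ) 1)) := isCompact_Icc.prod isCompact_Icc
  obtain ⟨M, hM⟩ := hcomp.exists_bound_of_continuousOn (hq.continuous.continuousOn)
  refine ⟨max C M + 1, by positivity, fun t ht x => ?_⟩
  rcases le_or_gt 1 |x| with hx | hx
  · calc |q t x| ≤ C * |x| := hCb t x ht hx
      _ ≤ (max C M + 1) * (1 + |x|) := by
        have h1 : C ≤ max C M + 1 := le_trans (le_max_left _ _) (by linarith)
        have h2 : (0:ℝ) ≤ |x| := abs_nonneg x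
        nlinarith
  · have hmem : ((t, x) : ℝ × ℝ) ∈ (Icc (-T) T) ×ˢ (Icc (-1 : ℝ) 1) := by
      refine ⟨ht, ?_⟩
      constructor <;> [linarith [neg_abs_le x, abs_lt.mp hx]; linarith [le_abs_self x, hx.le]]
    have := hM _ hmem
    rw [Real.norm_eq_abs] at this
    have h2 : (0:ℝ) ≤ |x| := abs_nonneg x
    have h3 : M ≤ max C M := le_max_right _ _
    calc |q t x| ≤ M := this
      _ ≤ (max C M + 1) * (1 + |x|) := by nlinarith [le_max_left C M, hC]
end
section
variable {Q W : ℝ × ℝ → ℝ}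

/-- One Picard–Lindelöf step along a characteristic: the value of `W` at `(t₀, x₀)` is attained
by `W` at time `t₁` if `t₁` is close enough to `t₀`. -/
theorem step (hQ : ContDiff ℝ (⊤ : ℕ∞) Q) (hW : ContDiff ℝ (⊤ : ℕ∞) W)
    (hTr : ∀ p, pt W p = 2 * Q p * px W p)
    {T K : ℝ} (hK : 0 < K) (hKb : ∀ t ∈ Icc (-T) T, ∀ x : ℝ, |Q (t, x)| ≤ K * (1 + |x|))
    {t₀ t₁ : ℝ} (ht₀ : t₀ ∈ Icc (-T) T) (ht₁ : t₁ ∈ Icc (-T) T)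
    (hd : |t₁ - t₀| ≤ 1 / (4 * (K + 1))) (x₀ : ℝ) :
    ∃ x₁ : ℝ, W (t₁, x₁) = W (t₀, x₀) := by
  classical
  set a := min t₀ t₁ with ha
  set b := max t₀ t₁ with hb
  have hab : a ≤ b := min_le_max
  have hsub : Icc a b ⊆ Icc (-T) T := by
    intro s hs
    exact ⟨le_trans (le_min ht₀.1 ht₁.1) hs.1, le_trans hs.2 (max_le ht₀.2 ht₁.2)⟩
  set V : ℝ × ℝ → ℝ := fun p => -(2 * Q p) with hV
  have hVc : ContDiff ℝ (⊤ : ℕ∞) V := (contDiff_const.mul hQ).neg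
  set v : ℝ → ℝ → ℝ := fun t x => V (t, x) with hv
  set R : ℝ := 1 + |x₀| with hR
  set C : ℝ := 4 * K * (1 + |x₀|) with hC
  -- Lipschitz constant from a compact bound on the spatial derivative of V
  have hcomp : IsCompact ((Icc (-T) T) ×ˢ (closedBall x₀ R)) :=
    isCompact_Icc.prod (isCompact_closedBall _ _)
  obtain ⟨M, hM⟩ := hcomp.exists_bound_of_continuousOn
    ((contDiff_pd (0,1) hVc).continuous.continuousOn)
  have hM0 : ∀ p ∈ (Icc (-T) T) ×ˢ (closedBall x₀ R), |px V p| ≤ max M 0 := fun p hp =>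
    le_max_of_le_left (by simpa [Real.norm_eq_abs] using hM p hp)
  set L : NNReal := (max M 0).toNNReal with hL
  have hlip : ∀ t ∈ Icc a b, LipschitzOnWith L (v t) (closedBall x₀ R) := by
    intro t ht
    apply Convex.lipschitzOnWith_of_nnnorm_deriv_le
      (fun x _ => ((hVc.differentiable (by simp)).comp
        ((differentiable_const t).prodMk differentiable_id)).differentiableAt)
    · intro x hx
      have hdx : deriv (V ∘ fun y => (t, id y)) x = px V (t, x) := deriv_slice_x hVc t x
      rw [← NNReal.coe_le_coe]
      rw [hL, Real.coe_toNNReal _ (le_max_right M 0)]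
      rw [coe_nnnorm, Real.norm_eq_abs, hdx]
      exact hM0 (t, x) ⟨hsub ht, hx⟩
    · exact convex_closedBall _ _
  have hR0 : 0 ≤ R := by positivity
  have hC0 : 0 ≤ C := by positivity
  have hPL : IsPicardLindelof v (⟨t₀, min_le_left _ _, le_max_left _ _⟩ : Icc a b) x₀
      R.toNNReal 0 C.toNNReal L := by
    refine ⟨?_, ?_, ?_, ?_⟩ <;>
      simp only [Real.coe_toNNReal _ hR0, Real.coe_toNNReal _ hC0, NNReal.coe_zero, sub_zero]
    · exact hlip
    · intro x _
      exact (hVc.continuous.comp (continuous_id.prodMk continuous_const)).continuousOn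
    · intro t ht x hx
      have hxb : |x| ≤ |x₀| + R := by
        have := mem_closedBall_iff_norm.mp hx
        rw [Real.norm_eq_abs] at this
        calc |x| = |x₀ + (x - x₀)| := by ring_nf
          _ ≤ |x₀| + |x - x₀| := abs_add_le _ _
          _ ≤ |x₀| + R := by linarith
      have hQb := hKb t (hsub ht) x
      rw [Real.norm_eq_abs]
      have : |v t x| = 2 * |Q (t, x)| := by
        show |(-(2 * Q (t, x)))| = 2 * |Q (t, x)|
        rw [abs_neg, abs_mul]
        norm_num
      rw [this]
      calc 2 * |Q (t, x)| ≤ 2 * (K * (1 + |x|)) := by linarith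
        _ ≤ 2 * (K * (1 + (|x₀| + R))) := by nlinarith [abs_nonneg x₀]
        _ = C := by rw [hC, hR]; ring
    · have hb1 : b ≤ t₀ + |t₁ - t₀| := by
        apply max_le (le_add_of_nonneg_right (abs_nonneg _))
        linarith [le_abs_self (t₁ - t₀)]
      have ha1 : t₀ - |t₁ - t₀| ≤ a := by
        apply le_min (by linarith [abs_nonneg (t₁ - t₀)])
        linarith [neg_abs_le (t₁ - t₀)]
      have hmax : max (b - t₀) (t₀ - a) ≤ |t₁ - t₀| := max_le (by linarith) (by linarith)
      have hCpos : 0 ≤ C := by positivity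
      calc C * max (b - t₀) (t₀ - a) ≤ C * (1 / (4 * (K + 1))) := by
            exact mul_le_mul_of_nonneg_left (le_trans hmax hd) hCpos
        _ ≤ R := by
            rw [hC, hR, mul_one_div, div_le_iff₀ (by positivity : (0:ℝ) < 4 * (K + 1))]
            nlinarith [abs_nonneg x₀]
  obtain ⟨γ, hγ0, hγ⟩ := hPL.exists_eq_forall_mem_Icc_hasDerivWithinAt₀
  replace hγ0 : γ t₀ = x₀ := hγ0
  -- W is constant along the characteristic γ
  set h : ℝ → ℝ := fun t => W (t, γ t) with hh
  have hγcont : ContinuousOn γ (Icc a b) := fun t ht => ((hγ t ht).continuousWithinAt)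
  have hhd : ∀ t ∈ Icc a b, HasDerivWithinAt h 0 (Icc a b) t := by
    intro t ht
    have hg : HasDerivWithinAt (fun s => ((s, γ s) : ℝ × ℝ)) (1, v t (γ t)) (Icc a b) t :=
      (hasDerivWithinAt_id t _).prodMk (hγ t ht)
    have hWf := (hW.differentiable (by simp) (t, γ t)).hasFDerivAt
    have hcomp := hWf.comp_hasDerivWithinAt t hg
    have hval : fderiv ℝ W (t, γ t) (1, v t (γ t)) = 0 := by
      have hdec : ((1 : ℝ), v t (γ t)) = ((1, 0) : ℝ × ℝ) + (v t (γ t)) • ((0, 1) : ℝ × ℝ) := by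
        simp [Prod.ext_iff]
      rw [hdec, map_add, (fderiv ℝ W (t, γ t)).map_smul, smul_eq_mul]
      have e1 : fderiv ℝ W (t, γ t) (1, 0) = pt W (t, γ t) := rfl
      have e2 : fderiv ℝ W (t, γ t) (0, 1) = px W (t, γ t) := rfl
      rw [e1, e2, hTr (t, γ t)]
      have : v t (γ t) = -(2 * Q (t, γ t)) := rfl
      rw [this]; ring
    rw [hval] at hcomp
    exact hcomp
  have hconst : ∀ s ∈ Icc a b, h s = h a := by
    apply constant_of_has_deriv_right_zero
    · exact hW.continuous.comp_continuousOn (continuousOn_id.prodMk hγcont)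
    · intro s hs
      refine (hhd s ⟨hs.1, hs.2.le⟩).mono_of_mem_nhdsWithin ?_
      rw [mem_nhdsWithin]
      exact ⟨Iio b, isOpen_Iio, hs.2, fun y hy => ⟨le_trans hs.1 hy.2, hy.1.le⟩⟩
  have h0 : h t₀ = h a := hconst t₀ ⟨min_le_left _ _, le_max_left _ _⟩
  have h1 : h t₁ = h a := hconst t₁ ⟨min_le_right _ _, le_max_right _ _⟩
  refine ⟨γ t₁, ?_⟩
  have : h t₁ = h t₀ := by rw [h0, h1]
  rw [hh] at this
  simpa [hγ0] using this
end
end KdVAux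

theorem stmt5 (q φ ψ : ℝ → ℝ → ℝ)
    (hq : ContDiff ℝ (⊤ : ℕ∞) (fun p : ℝ × ℝ => q p.1 p.2))
    (hKdV : ∀ t x : ℝ, KdVexpr q t x = 0)
    (hgrowth : ∀ T : ℝ, 0 < T → ∃ C : ℝ, 0 < C ∧
      ∀ t x : ℝ, t ∈ Set.Icc (-T) T → 1 ≤ |x| → |q t x| ≤ C * |x|)
    (hφ : ContDiff ℝ (⊤ : ℕ∞) (fun p : ℝ × ℝ => φ p.1 p.2))
    (hψ : ContDiff ℝ (⊤ : ℕ∞) (fun p : ℝ × ℝ => ψ p.1 p.2))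
    (hφevol : ∀ t x : ℝ, pdt φ t x = 2 * q t x * pdx φ t x - pdx q t x * φ t x)
    (hψevol : ∀ t x : ℝ, pdt ψ t x = 2 * q t x * pdx ψ t x - pdx q t x * ψ t x)
    (hφ₀ : ∀ x : ℝ, -(deriv (deriv (φ 0)) x) + q 0 x * φ 0 x = 0)
    (hψ₀ : ∀ x : ℝ, -(deriv (deriv (ψ 0)) x) + q 0 x * ψ 0 x = 0) :
    ∀ t x t' x' : ℝ,
      φ t x * pdx ψ t x - ψ t x * pdx φ t x
        = φ t' x' * pdx ψ t' x' - ψ t' x' * pdx φ t' x' := by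
  classical
  open KdVAux in
  set Qj : ℝ × ℝ → ℝ := fun p => q p.1 p.2 with hQjdef
  set Φj : ℝ × ℝ → ℝ := fun p => φ p.1 p.2 with hΦjdef
  set Ψj : ℝ × ℝ → ℝ := fun p => ψ p.1 p.2 with hΨjdef
  have hQj : ContDiff ℝ (⊤ : ℕ∞) Qj := hq
  have hΦj : ContDiff ℝ (⊤ : ℕ∞) Φj := hφ
  have hΨj : ContDiff ℝ (⊤ : ℕ∞) Ψj := hψ
  have hΦe : ∀ p : ℝ × ℝ, pt Φj p = 2 * Qj p * px Φj p - px Qj p * Φj p := by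
    rintro ⟨t, x⟩
    have e1 : pdt φ t x = pt Φj (t, x) := deriv_slice_t hΦj t x
    have e2 : pdx φ t x = px Φj (t, x) := deriv_slice_x hΦj t x
    have e3 : pdx q t x = px Qj (t, x) := deriv_slice_x hQj t x
    have h := hφevol t x
    rw [e1, e2, e3] at h
    exact h
  have hΨe : ∀ p : ℝ × ℝ, pt Ψj p = 2 * Qj p * px Ψj p - px Qj p * Ψj p := by
    rintro ⟨t, x⟩
    have e1 : pdt ψ t x = pt Ψj (t, x) := deriv_slice_t hΨj t x
    have e2 : pdx ψ t x = px Ψj (t, x) := deriv_slice_x hΨj t x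
    have e3 : pdx q t x = px Qj (t, x) := deriv_slice_x hQj t x
    have h := hψevol t x
    rw [e1, e2, e3] at h
    exact h
  have hwt := fun p => wronskian_transport hQj hΦj hΨj hΦe hΨe p
  set Wj : ℝ × ℝ → ℝ := fun p => Φj p * px Ψj p - Ψj p * px Φj p with hWjdef
  have hWj : ContDiff ℝ (⊤ : ℕ∞) Wj :=
    (hΦj.mul (contDiff_pd _ hΨj)).sub (hΨj.mul (contDiff_pd _ hΦj))
  have hTr : ∀ p : ℝ × ℝ, pt Wj p = 2 * Qj p * px Wj p := by
    intro p
    rw [hWjdef]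
    rw [(hwt p).2, (hwt p).1]
  have hzero : ∀ y : ℝ, Wj (0, y) = Wj (0, 0) := by
    intro y
    exact wronskian_const_at_zero hQj hΦj hΨj hφ₀ hψ₀ (fun p => (hwt p).1) y
  -- main claim : W is everywhere equal to its value at the origin
  have main : ∀ s y : ℝ, Wj (s, y) = Wj (0, 0) := by
    intro s₀ y₀
    set T : ℝ := |s₀| + 1 with hTdef
    have hT : 0 < T := by positivity
    obtain ⟨K, hK, hKb⟩ := linear_growth hq hgrowth T hT
    have hKb' : ∀ t ∈ Icc (-T) T, ∀ x : ℝ, |Qj (t, x)| ≤ K * (1 + |x|) := hKb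
    set δ : ℝ := 1 / (4 * (K + 1)) with hδdef
    have hδ : 0 < δ := by positivity
    have claim : ∀ n : ℕ, ∀ s y : ℝ, |s| ≤ T - 1 → |s| ≤ n * δ → Wj (s, y) = Wj (0, 0) := by
      intro n
      induction n with
      | zero =>
        intro s y _ hs
        have : s = 0 := by
          have := abs_nonneg s
          have h0 : |s| ≤ 0 := by simpa using hs
          have : |s| = 0 := le_antisymm h0 (abs_nonneg s)
          exact abs_eq_zero.mp this
        rw [this]
        exact hzero y
      | succ n ih =>
        intro s y hsT hs
        rcases le_or_gt |s| (n * δ) with hcase | hcase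
        · exact ih s y hsT hcase
        have hsIcc : s ∈ Icc (-T) T := by
          constructor <;> [linarith [neg_abs_le s]; linarith [le_abs_self s]]
        rcases le_total 0 s with hsgn | hsgn
        · set s' : ℝ := max (s - δ) 0 with hs'def
          have hs'0 : 0 ≤ s' := le_max_right _ _
          have hs'le : s' ≤ s := max_le (by linarith) hsgn
          have habs : |s'| ≤ |s| := by
            rw [abs_of_nonneg hs'0, abs_of_nonneg hsgn]; exact hs'le
          have hdist : |s' - s| ≤ δ := by
            rw [abs_le]
            constructor
            · have := le_max_left (s - δ) (0:ℝ); linarith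
            · linarith
          have hs'n : |s'| ≤ n * δ := by
            rw [abs_of_nonneg hs'0]
            apply max_le
            · rw [abs_of_nonneg hsgn] at hs; push_cast at hs; linarith
            · positivity
          have hs'Icc : s' ∈ Icc (-T) T := by
            constructor <;>
              [linarith [neg_abs_le s', habs.trans hsT]; linarith [le_abs_self s', habs.trans hsT]]
          obtain ⟨y', hy'⟩ := step hQj hWj hTr hK hKb' hsIcc hs'Icc hdist y
          rw [← hy']
          exact ih s' y' (habs.trans hsT) hs'n
        · set s' : ℝ := min (s + δ) 0 with hs'def
          have hs'0 : s' ≤ 0 := min_le_right _ _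
          have hs'ge : s ≤ s' := le_min (by linarith) hsgn
          have habs : |s'| ≤ |s| := by
            rw [abs_of_nonpos hs'0, abs_of_nonpos hsgn]; linarith
          have hdist : |s' - s| ≤ δ := by
            rw [abs_le]
            constructor
            · linarith
            · have := min_le_left (s + δ) (0:ℝ); linarith
          have hs'n : |s'| ≤ n * δ := by
            rw [abs_of_nonpos hs'0]
            have h1 : -(n * δ) ≤ s' := by
              apply le_min
              · rw [abs_of_nonpos hsgn] at hs; push_cast at hs; linarith
              · have h2 : (0:ℝ) ≤ (n : ℝ) * δ := by positivity
                linarith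
            linarith
          have hs'Icc : s' ∈ Icc (-T) T := by
            constructor <;>
              [linarith [neg_abs_le s', habs.trans hsT]; linarith [le_abs_self s', habs.trans hsT]]
          obtain ⟨y', hy'⟩ := step hQj hWj hTr hK hKb' hsIcc hs'Icc hdist y
          rw [← hy']
          exact ih s' y' (habs.trans hsT) hs'n
    have hn : |s₀| ≤ (Nat.ceil (|s₀| / δ) : ℕ) * δ := by
      have h1 : |s₀| / δ ≤ (Nat.ceil (|s₀| / δ) : ℝ) := Nat.le_ceil _
      rw [div_le_iff₀ hδ] at h1
      exact h1
    exact claim (Nat.ceil (|s₀| / δ)) s₀ y₀ (by simp [hTdef]) hn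
  intro t x t' x'
  have g : ∀ t x : ℝ, φ t x * pdx ψ t x - ψ t x * pdx φ t x = Wj (t, x) := by
    intro t x
    have e1 : pdx ψ t x = px Ψj (t, x) := deriv_slice_x hΨj t x
    have e2 : pdx φ t x = px Φj (t, x) := deriv_slice_x hΦj t x
    rw [e1, e2]
  rw [g t x, g t' x', main t x, main t' x']
end

section
/- Suppose q : I × ℝ → ℝ is a smooth solution of KdV on an open interval I, λ ∈ ℝ, and ψ : I × ℝ → ℝ is a smooth solution of ψ_t = (4λ + 2q)ψₓ − qₓψ. Set φ := L_λψ = −ψₓₓ + (q − λ)ψ. Then φ satisfies the first-order equation φ_t = (4λ + 2q)φₓ + 3qₓφ. In particular, if φ(t′,·) ≡ 0 for some t′ ∈ I and q has at-most-linear growth in x locally uniformly in t, then L_λ(t)ψ(t,·) = 0 for all t ∈ I. -/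
open Set

noncomputable def fdx (f : ℝ → ℝ → ℝ) : ℝ → ℝ → ℝ :=
  fun t x => fderiv ℝ (fun p : ℝ × ℝ => f p.1 p.2) (t, x) (0, 1)
noncomputable def fdt (f : ℝ → ℝ → ℝ) : ℝ → ℝ → ℝ :=
  fun t x => fderiv ℝ (fun p : ℝ × ℝ => f p.1 p.2) (t, x) (1, 0)
abbrev Sm (f : ℝ → ℝ → ℝ) : Prop :=
  ContDiff ℝ (((⊤ : ℕ∞) : WithTop ℕ∞)) (fun p : ℝ × ℝ => f p.1 p.2)
lemma sm_fdx {f : ℝ → ℝ → ℝ} (hf : Sm f) : Sm (fdx f) := by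
  have h := (hf.fderiv_right (m := ((⊤ : ℕ∞) : WithTop ℕ∞)) (by exact_mod_cast le_refl _)).clm_apply
    (contDiff_const (c := ((0 : ℝ), (1 : ℝ))))
  unfold fdx
  simpa using h

lemma sm_fdt {f : ℝ → ℝ → ℝ} (hf : Sm f) : Sm (fdt f) := by
  have h := (hf.fderiv_right (m := ((⊤ : ℕ∞) : WithTop ℕ∞)) (by exact_mod_cast le_refl _)).clm_apply
    (contDiff_const (c := ((1 : ℝ), (0 : ℝ))))
  unfold fdt
  simpa using h

lemma sm_hasDerivAt_x {f : ℝ → ℝ → ℝ} (hf : Sm f) (t x : ℝ) :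
    HasDerivAt (f t) (fdx f t x) x := by
  have h1 : HasFDerivAt (fun p : ℝ × ℝ => f p.1 p.2)
      (fderiv ℝ (fun p : ℝ × ℝ => f p.1 p.2) (t, x)) (t, x) :=
    ((hf.differentiable (by norm_num)) _).hasFDerivAt
  have h2 : HasDerivAt (fun y : ℝ => ((t, y) : ℝ × ℝ)) ((0 : ℝ), (1 : ℝ)) x :=
    HasDerivAt.prodMk (hasDerivAt_const x t) (hasDerivAt_id x)
  have := h1.comp_hasDerivAt x h2
  simpa [Function.comp_def, fdx] using this

lemma sm_hasDerivAt_t {f : ℝ → ℝ → ℝ} (hf : Sm f) (t x : ℝ) :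
    HasDerivAt (fun s => f s x) (fdt f t x) t := by
  have h1 : HasFDerivAt (fun p : ℝ × ℝ => f p.1 p.2)
      (fderiv ℝ (fun p : ℝ × ℝ => f p.1 p.2) (t, x)) (t, x) :=
    ((hf.differentiable (by norm_num)) _).hasFDerivAt
  have h2 : HasDerivAt (fun s : ℝ => ((s, x) : ℝ × ℝ)) ((1 : ℝ), (0 : ℝ)) t :=
    HasDerivAt.prodMk (hasDerivAt_id t) (hasDerivAt_const t x)
  have := h1.comp_hasDerivAt t h2
  simpa [Function.comp_def, fdt] using this

lemma sm_deriv_x {f : ℝ → ℝ → ℝ} (hf : Sm f) (t x : ℝ) :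
    deriv (f t) x = fdx f t x := (sm_hasDerivAt_x hf t x).deriv

lemma sm_deriv_t {f : ℝ → ℝ → ℝ} (hf : Sm f) (t x : ℝ) :
    deriv (fun s => f s x) t = fdt f t x := (sm_hasDerivAt_t hf t x).deriv
lemma fdt_fdx_comm {f : ℝ → ℝ → ℝ} (hf : Sm f) (t x : ℝ) :
    fdt (fdx f) t x = fdx (fdt f) t x := by
  set F : ℝ × ℝ → ℝ := fun p : ℝ × ℝ => f p.1 p.2 with hF
  have hD : ContDiff ℝ (((⊤ : ℕ∞) : WithTop ℕ∞)) (fderiv ℝ F) :=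
    hf.fderiv_right (by exact_mod_cast le_refl _)
  have hDd : DifferentiableAt ℝ (fderiv ℝ F) (t, x) :=
    (hD.differentiable (by norm_num)) _
  have key : ∀ v w : ℝ × ℝ,
      fderiv ℝ (fun p : ℝ × ℝ => fderiv ℝ F p v) (t, x) w
        = fderiv ℝ (fderiv ℝ F) (t, x) w v := by
    intro v w
    have : (fun p : ℝ × ℝ => fderiv ℝ F p v)
        = (ContinuousLinearMap.apply ℝ ℝ v) ∘ (fderiv ℝ F) := rfl
    rw [this, fderiv_comp _ (ContinuousLinearMap.apply ℝ ℝ v).differentiableAt hDd]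
    simp
  have hsymm : fderiv ℝ (fderiv ℝ F) (t, x) ((1 : ℝ), (0 : ℝ)) ((0 : ℝ), (1 : ℝ))
      = fderiv ℝ (fderiv ℝ F) (t, x) ((0 : ℝ), (1 : ℝ)) ((1 : ℝ), (0 : ℝ)) :=
    (hf.contDiffAt.isSymmSndFDerivAt (by rw [minSmoothness_of_isRCLikeNormedField]; exact WithTop.coe_le_coe.mpr le_top)) _ _
  have e1 : fdt (fdx f) t x
      = fderiv ℝ (fun p : ℝ × ℝ => fderiv ℝ F p (0, 1)) (t, x) (1, 0) := by
    simp only [fdt, fdx, hF]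
  have e2 : fdx (fdt f) t x
      = fderiv ℝ (fun p : ℝ × ℝ => fderiv ℝ F p (1, 0)) (t, x) (0, 1) := by
    simp only [fdt, fdx, hF]
  rw [e1, e2, key, key, hsymm]

lemma sm_neg {f : ℝ → ℝ → ℝ} (hf : Sm f) : Sm (fun t x => -(f t x)) := hf.neg
lemma sm_mul {f g : ℝ → ℝ → ℝ} (hf : Sm f) (hg : Sm g) : Sm (fun t x => f t x * g t x) := hf.mul hg
lemma sm_add {f g : ℝ → ℝ → ℝ} (hf : Sm f) (hg : Sm g) : Sm (fun t x => f t x + g t x) := hf.add hg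
lemma sm_sub_const {f : ℝ → ℝ → ℝ} (hf : Sm f) (c : ℝ) : Sm (fun t x => f t x - c) :=
  hf.sub contDiff_const
lemma sm_const_add {f : ℝ → ℝ → ℝ} (hf : Sm f) (c : ℝ) : Sm (fun t x => c + f t x) :=
  contDiff_const.add hf
lemma sm_const_mul {f : ℝ → ℝ → ℝ} (hf : Sm f) (c : ℝ) : Sm (fun t x => c * f t x) :=
  contDiff_const.mul hf

/-- The function `Φ = L_lam ψ` written with `fdx`. -/
noncomputable def Phi (q ψ : ℝ → ℝ → ℝ) (lam : ℝ) : ℝ → ℝ → ℝ :=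
  fun t x => -(fdx (fdx ψ) t x) + (q t x - lam) * ψ t x

lemma sm_Phi {q ψ : ℝ → ℝ → ℝ} (lam : ℝ) (hq : Sm q) (hψ : Sm ψ) : Sm (Phi q ψ lam) :=
  (sm_fdx (sm_fdx hψ)).neg.add ((hq.sub contDiff_const).mul hψ)

/-- Evolution of `Φ` along the flow (core computation, part 1). -/
lemma part1_core (q ψ : ℝ → ℝ → ℝ) (lam t : ℝ) (hq : Sm q) (hψ : Sm ψ)
    (hKdVt : ∀ x, fdt q t x = 6 * q t x * fdx q t x - fdx (fdx (fdx q)) t x)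
    (hevolt : ∀ x, fdt ψ t x = (4 * lam + 2 * q t x) * fdx ψ t x - fdx q t x * ψ t x) :
    ∀ x, fdt (Phi q ψ lam) t x
      = (4 * lam + 2 * q t x) * fdx (Phi q ψ lam) t x
        + 3 * fdx q t x * Phi q ψ lam t x := by
  intro x
  have hψx := sm_fdx hψ
  have hψxx := sm_fdx hψx
  have hqx := sm_fdx hq
  have hqxx := sm_fdx hqx
  -- (b): x-derivative of the evolution equation
  have hb : ∀ y, fdx (fdt ψ) t y
      = 2 * fdx q t y * fdx ψ t y + (4 * lam + 2 * q t y) * fdx (fdx ψ) t y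
        - (fdx (fdx q) t y * ψ t y + fdx q t y * fdx ψ t y) := by
    intro y
    have hfun : (fdt ψ t) = fun z => (4 * lam + 2 * q t z) * fdx ψ t z - fdx q t z * ψ t z :=
      funext fun z => hevolt z
    have hRHS : HasDerivAt (fun z => (4 * lam + 2 * q t z) * fdx ψ t z - fdx q t z * ψ t z)
        (2 * fdx q t y * fdx ψ t y + (4 * lam + 2 * q t y) * fdx (fdx ψ) t y
          - (fdx (fdx q) t y * ψ t y + fdx q t y * fdx ψ t y)) y := by
      have h1 : HasDerivAt (fun z => 4 * lam + 2 * q t z) (2 * fdx q t y) y := by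
        simpa using (((sm_hasDerivAt_x hq t y).const_mul 2).const_add (4 * lam))
      exact (h1.mul (sm_hasDerivAt_x hψx t y)).sub
        ((sm_hasDerivAt_x hqx t y).mul (sm_hasDerivAt_x hψ t y))
    rw [← sm_deriv_x (sm_fdt hψ) t y, hfun]
    exact hRHS.deriv
  -- (c): second x-derivative of the evolution equation
  have hc : fdx (fdx (fdt ψ)) t x
      = (4 * lam + 2 * q t x) * fdx (fdx (fdx ψ)) t x
        + 3 * fdx q t x * fdx (fdx ψ) t x - fdx (fdx (fdx q)) t x * ψ t x := by
    have hfun : (fdx (fdt ψ) t) = fun z =>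
        2 * fdx q t z * fdx ψ t z + (4 * lam + 2 * q t z) * fdx (fdx ψ) t z
          - (fdx (fdx q) t z * ψ t z + fdx q t z * fdx ψ t z) :=
      funext fun z => hb z
    have h1 : HasDerivAt (fun z => 2 * fdx q t z) (2 * fdx (fdx q) t x) x :=
      (sm_hasDerivAt_x hqx t x).const_mul 2
    have h2 : HasDerivAt (fun z => 4 * lam + 2 * q t z) (2 * fdx q t x) x := by
      simpa using (((sm_hasDerivAt_x hq t x).const_mul 2).const_add (4 * lam))
    have h3 := h1.mul (sm_hasDerivAt_x hψx t x)
    have h4 := h2.mul (sm_hasDerivAt_x hψxx t x)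
    have h5 := (sm_hasDerivAt_x hqxx t x).mul (sm_hasDerivAt_x hψ t x)
    have h6 := (sm_hasDerivAt_x hqx t x).mul (sm_hasDerivAt_x hψx t x)
    have hRHS := (h3.add h4).sub (h5.add h6)
    rw [← sm_deriv_x (sm_fdx (sm_fdt hψ)) t x, hfun]
    refine hRHS.deriv.trans ?_
    ring
  -- (d): commutation of partial derivatives
  have hcomm : fdt (fdx (fdx ψ)) t x = fdx (fdx (fdt ψ)) t x := by
    have e1 : fdt (fdx ψ) = fdx (fdt ψ) := funext fun a => funext fun b => fdt_fdx_comm hψ a b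
    calc fdt (fdx (fdx ψ)) t x = fdx (fdt (fdx ψ)) t x := fdt_fdx_comm hψx t x
      _ = fdx (fdx (fdt ψ)) t x := by rw [e1]
  -- now compute fdt Φ and fdx Φ
  have hT : fdt (Phi q ψ lam) t x
      = -(fdt (fdx (fdx ψ)) t x) + (fdt q t x * ψ t x + (q t x - lam) * fdt ψ t x) := by
    have h1 := (sm_hasDerivAt_t hψxx t x).neg
    have h2 := ((sm_hasDerivAt_t hq t x).sub_const lam).mul (sm_hasDerivAt_t hψ t x)
    have h := h1.add h2
    have : (fun s => Phi q ψ lam s x)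
        = fun s => -(fdx (fdx ψ) s x) + (q s x - lam) * ψ s x := rfl
    rw [← sm_deriv_t (sm_Phi lam hq hψ) t x, this]; exact h.deriv
  have hX : fdx (Phi q ψ lam) t x
      = -(fdx (fdx (fdx ψ)) t x) + (fdx q t x * ψ t x + (q t x - lam) * fdx ψ t x) := by
    have h1 := (sm_hasDerivAt_x hψxx t x).neg
    have h2 := ((sm_hasDerivAt_x hq t x).sub_const lam).mul (sm_hasDerivAt_x hψ t x)
    have h := h1.add h2
    have heq : ((Phi q ψ lam) t)
        = fun y => -(fdx (fdx ψ) t y) + (q t y - lam) * ψ t y := rfl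
    rw [← sm_deriv_x (sm_Phi lam hq hψ) t x, heq]; exact h.deriv
  -- put everything together
  rw [hT, hX, hcomm, hc, hKdVt x, hevolt x]
  unfold Phi
  ring

/-- One propagation step along characteristics. -/
lemma step_lemma (q ψ : ℝ → ℝ → ℝ) (lam : ℝ) (I : Set ℝ) (hq : Sm q) (hψ : Sm ψ)
    (hpart1 : ∀ t ∈ I, ∀ x : ℝ, fdt (Phi q ψ lam) t x
        = (4 * lam + 2 * q t x) * fdx (Phi q ψ lam) t x + 3 * fdx q t x * Phi q ψ lam t x)
    (J : Set ℝ) (hJI : J ⊆ I) (hJc : J.OrdConnected)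
    (C' : ℝ) (hC' : 0 < C') (hqlin : ∀ s ∈ J, ∀ y : ℝ, |q s y| ≤ C' * (1 + |y|))
    (s u : ℝ) (hs : s ∈ J) (hu : u ∈ J) (hdist : |u - s| ≤ 1 / (4 * C'))
    (hzs : ∀ y, Phi q ψ lam s y = 0) :
    ∀ y, Phi q ψ lam u y = 0 := by
  intro y₀
  set δ : ℝ := 1 / (4 * C') with hδdef
  have hδ : 0 < δ := by positivity
  set m : ℝ := min s u with hmdef
  set M : ℝ := max s u with hMdef
  have hmM : m ≤ M := min_le_max
  have hmJ : m ∈ J := by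
    rcases le_total s u with h | h
    · rwa [hmdef, min_eq_left h]
    · rwa [hmdef, min_eq_right h]
  have hMJ : M ∈ J := by
    rcases le_total s u with h | h
    · rwa [hMdef, max_eq_right h]
    · rwa [hMdef, max_eq_left h]
  have hIccJ : Icc m M ⊆ J := hJc.out hmJ hMJ
  have hMmδ : M - m ≤ δ := by
    have h1 : M - m = |u - s| := max_sub_min_eq_abs s u
    rw [h1]; exact hdist
  set v : ℝ → ℝ → ℝ := fun τ z => -(4 * lam + 2 * q τ z) with hvdef
  set A : ℝ := 4 * |lam| + 2 * C' * (1 + |y₀|) with hAdef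
  have hA : 0 ≤ A := by positivity
  set R : ℝ := 2 * δ * A + 1 with hRdef
  have hR : 0 < R := by positivity
  set Cv : ℝ := 4 * |lam| + 2 * C' * (1 + (|y₀| + R)) with hCvdef
  have hCv : 0 ≤ Cv := by positivity
  -- Lipschitz bound for v in space
  obtain ⟨L₀, hL₀⟩ := (isCompact_Icc.prod (isCompact_Icc (a := y₀ - R) (b := y₀ + R))).exists_bound_of_continuousOn
    (f := fun p : ℝ × ℝ => 2 * fdx q p.1 p.2)
    (((sm_fdx hq).continuous.const_smul (2:ℝ)).continuousOn)
  have hlip : ∀ τ ∈ Icc m M, LipschitzOnWith L₀.toNNReal (v τ) (Metric.closedBall y₀ R) := by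
    intro τ hτ
    rw [Real.closedBall_eq_Icc]
    apply Convex.lipschitzOnWith_of_nnnorm_hasDerivWithin_le (f' := fun z => -(2 * fdx q τ z))
      (convex_Icc _ _)
    · intro z _
      have : HasDerivAt (fun z => -(4 * lam + 2 * q τ z)) (-(2 * fdx q τ z)) z := by
        exact (((sm_hasDerivAt_x hq τ z).const_mul 2).const_add (4 * lam)).neg
      exact this.hasDerivWithinAt
    · intro z hz
      have h1 : ‖(2 : ℝ) * fdx q τ z‖ ≤ L₀ := hL₀ (τ, z) ⟨hτ, hz⟩
      have : ‖-(2 * fdx q τ z)‖ ≤ L₀ := by simpa using h1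
      have h2 : ‖-(2 * fdx q τ z)‖.toNNReal ≤ L₀.toNNReal := Real.toNNReal_le_toNNReal this
      rwa [norm_toNNReal] at h2
  have hnorm : ∀ τ ∈ Icc m M, ∀ z ∈ Metric.closedBall y₀ R, ‖v τ z‖ ≤ Cv := by
    intro τ hτ z hz
    have hzb : |z| ≤ |y₀| + R := by
      have h1 : |z - y₀| ≤ R := by simpa [Real.dist_eq] using (Metric.mem_closedBall.mp hz)
      have := abs_sub_abs_le_abs_sub z y₀
      linarith [abs_nonneg (z - y₀)]
    have hqb : |q τ z| ≤ C' * (1 + |z|) := hqlin τ (hIccJ hτ) z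
    have h3 : ‖v τ z‖ = |4 * lam + 2 * q τ z| := by
      rw [hvdef]
      rw [Real.norm_eq_abs, abs_neg]
    have h4 : |4 * lam + 2 * q τ z| ≤ 4 * |lam| + 2 * |q τ z| := by
      calc |4 * lam + 2 * q τ z| ≤ |4 * lam| + |2 * q τ z| := abs_add_le _ _
        _ = 4 * |lam| + 2 * |q τ z| := by rw [abs_mul, abs_mul]; norm_num
    rw [h3, hCvdef]
    nlinarith [abs_nonneg (q τ z), abs_nonneg z]
  -- time bound
  have htmax : ∀ τ ∈ Icc m M, max (M - τ) (τ - m) ≤ δ := by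
    intro τ hτ
    exact max_le (by linarith [hτ.1]) (by linarith [hτ.2])
  have hCmul : Cv * max (M - u) (u - m) ≤ R := by
    have h1 : max (M - u) (u - m) ≤ δ := htmax u ⟨min_le_right s u, le_max_right s u⟩
    have h2 : Cv * max (M - u) (u - m) ≤ Cv * δ :=
      mul_le_mul_of_nonneg_left h1 hCv
    have h3 : 2 * C' * δ = 1 / 2 := by
      rw [hδdef]; field_simp; ring
    have h4 : Cv * δ ≤ R := by
      have : Cv * δ = A * δ + (2 * C' * δ) * R := by rw [hCvdef, hAdef]; ring
      rw [this, h3, hRdef]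
      nlinarith
    linarith
  have hpl : IsPicardLindelof v (tmin := m) (tmax := M) ⟨u, min_le_right s u, le_max_right s u⟩ y₀
      ⟨R, hR.le⟩ 0 ⟨Cv, hCv⟩ L₀.toNNReal :=
    { lipschitzOnWith := hlip
      continuousOn := fun z _ => (by
        have hcq : Continuous (fun τ : ℝ => q τ z) :=
          hq.continuous.comp (continuous_id.prodMk continuous_const)
        have : Continuous (fun τ : ℝ => v τ z) :=
          (continuous_const.add (continuous_const.mul hcq)).neg
        exact this.continuousOn)
      norm_le := hnorm
      mul_max_le := by simp only [NNReal.coe_zero, sub_zero]; exact hCmul }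
  obtain ⟨f, hf0, hfd⟩ := hpl.exists_eq_forall_mem_Icc_hasDerivWithinAt₀
  replace hf0 : f u = y₀ := hf0
  have hfc : ContinuousOn f (Icc m M) := fun τ hτ => (hfd τ hτ).continuousWithinAt
  -- bound for the coefficient along the path
  obtain ⟨K₀, hK₀⟩ := (isCompact_Icc.prod (isCompact_Icc.image_of_continuousOn hfc)).exists_bound_of_continuousOn
    (f := fun p : ℝ × ℝ => 3 * fdx q p.1 p.2)
    ((continuous_const.mul (sm_fdx hq).continuous).continuousOn)
  set B : ℝ → ℝ := fun τ => 3 * fdx q τ (f τ) with hBdef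
  have hBb : ∀ τ ∈ Icc m M, |B τ| ≤ K₀ := by
    intro τ hτ
    exact hK₀ (τ, f τ) ⟨hτ, Set.mem_image_of_mem f hτ⟩
  have hK₀0 : 0 ≤ K₀ := le_trans (abs_nonneg _) (hBb m ⟨le_refl m, hmM⟩)
  set w : ℝ → ℝ → ℝ := fun τ z => max (-K₀) (min K₀ (B τ)) * z with hwdef
  have hwB : ∀ τ ∈ Icc m M, ∀ z : ℝ, w τ z = B τ * z := by
    intro τ hτ z
    have h := abs_le.mp (hBb τ hτ)
    rw [hwdef]
    simp only []
    rw [min_eq_right h.2, max_eq_right h.1]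
  have hclip : ∀ τ : ℝ, |max (-K₀) (min K₀ (B τ))| ≤ K₀ := by
    intro τ
    rw [abs_le]
    constructor
    · exact le_max_left _ _
    · exact max_le (by linarith) (min_le_left _ _)
  have hLipw : ∀ τ : ℝ, LipschitzWith K₀.toNNReal (w τ) := by
    intro τ
    apply LipschitzWith.of_dist_le_mul
    intro a b
    rw [Real.dist_eq, Real.dist_eq, Real.coe_toNNReal _ hK₀0]
    have : w τ a - w τ b = max (-K₀) (min K₀ (B τ)) * (a - b) := by rw [hwdef]; ring
    rw [this, abs_mul]
    exact mul_le_mul_of_nonneg_right (hclip τ) (abs_nonneg _)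
  -- the function g along the characteristic
  set g : ℝ → ℝ := fun τ => Phi q ψ lam τ (f τ) with hgdef
  have hg' : ∀ τ ∈ Icc m M, HasDerivWithinAt g (B τ * g τ) (Icc m M) τ := by
    intro τ hτ
    have hpath : HasDerivWithinAt (fun τ : ℝ => ((τ, f τ) : ℝ × ℝ))
        ((1 : ℝ), v τ (f τ)) (Icc m M) τ :=
      HasDerivWithinAt.prodMk (hasDerivWithinAt_id τ _) (hfd τ hτ)
    have hΦd : HasFDerivAt (fun p : ℝ × ℝ => Phi q ψ lam p.1 p.2)
        (fderiv ℝ (fun p : ℝ × ℝ => Phi q ψ lam p.1 p.2) (τ, f τ)) (τ, f τ) :=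
      (((sm_Phi lam hq hψ).differentiable (by norm_num)) _).hasFDerivAt
    have hcomp := hΦd.comp_hasDerivWithinAt τ hpath
    have hval : fderiv ℝ (fun p : ℝ × ℝ => Phi q ψ lam p.1 p.2) (τ, f τ)
        ((1 : ℝ), v τ (f τ)) = B τ * g τ := by
      have hsplit : ((1 : ℝ), v τ (f τ)) = ((1 : ℝ), (0 : ℝ)) + v τ (f τ) • ((0 : ℝ), (1 : ℝ)) := by
        simp [Prod.ext_iff]
      rw [hsplit, map_add, map_smul]
      have e1 : fderiv ℝ (fun p : ℝ × ℝ => Phi q ψ lam p.1 p.2) (τ, f τ) ((1 : ℝ), (0 : ℝ))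
          = fdt (Phi q ψ lam) τ (f τ) := rfl
      have e2 : fderiv ℝ (fun p : ℝ × ℝ => Phi q ψ lam p.1 p.2) (τ, f τ) ((0 : ℝ), (1 : ℝ))
          = fdx (Phi q ψ lam) τ (f τ) := rfl
      rw [e1, e2, hpart1 τ (hJI (hIccJ hτ)) (f τ), smul_eq_mul, hvdef, hgdef, hBdef]
      ring
    rw [hval] at hcomp
    exact hcomp
  have hgc : ContinuousOn g (Icc m M) := fun τ hτ => (hg' τ hτ).continuousWithinAt
  have hgs : g s = 0 := hzs (f s)
  have hvlip : ∀ τ : ℝ, LipschitzOnWith K₀.toNNReal (w τ) (Set.univ : Set ℝ) :=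
    fun τ => (hLipw τ).lipschitzOnWith
  have hzc : ContinuousOn (fun _ : ℝ => (0 : ℝ)) (Icc m M) := continuousOn_const
  have hgu : g u = 0 := by
    have huI : u ∈ Icc m M := ⟨min_le_right s u, le_max_right s u⟩
    rcases le_total s u with hsu | hus
    · have hm : m = s := min_eq_left hsu
      have key : EqOn g (fun _ => (0 : ℝ)) (Icc m M) :=
        ODE_solution_unique_of_mem_Icc_right (v := w) (s := fun _ => Set.univ)
          (fun τ _ => hvlip τ) hgc
          (fun τ hτ => by
            have h2 := (hg' τ (Ico_subset_Icc_self hτ)).mono_of_mem_nhdsWithin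
              (Icc_mem_nhdsGE_of_mem hτ)
            rw [← hwB τ (Ico_subset_Icc_self hτ) (g τ)] at h2
            exact h2)
          (fun τ _ => Set.mem_univ _)
          hzc
          (fun τ hτ => by simpa [hwdef] using hasDerivWithinAt_const τ (Ici τ) (0 : ℝ))
          (fun τ _ => Set.mem_univ _)
          (by rw [hm]; exact hgs)
      exact key huI
    · have hM : M = s := max_eq_left hus
      have key : EqOn g (fun _ => (0 : ℝ)) (Icc m M) :=
        ODE_solution_unique_of_mem_Icc_left (v := w) (s := fun _ => Set.univ)
          (fun τ _ => hvlip τ) hgc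
          (fun τ hτ => by
            have h2 := (hg' τ (Ioc_subset_Icc_self hτ)).mono_of_mem_nhdsWithin
              (Icc_mem_nhdsLE_of_mem hτ)
            rw [← hwB τ (Ioc_subset_Icc_self hτ) (g τ)] at h2
            exact h2)
          (fun τ _ => Set.mem_univ _)
          hzc
          (fun τ hτ => by simpa [hwdef] using hasDerivWithinAt_const τ (Iic τ) (0 : ℝ))
          (fun τ _ => Set.mem_univ _)
          (by rw [hM]; exact hgs)
      exact key huI
  rw [hgdef] at hgu
  simpa [hf0] using hgu


theorem stmt18 (I : Set ℝ) (hI : IsOpen I) (hIconn : I.OrdConnected)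
    (q ψ : ℝ → ℝ → ℝ) (lam : ℝ)
    (hq : ContDiff ℝ (⊤ : ℕ∞) (fun p : ℝ × ℝ => q p.1 p.2))
    (hψ : ContDiff ℝ (⊤ : ℕ∞) (fun p : ℝ × ℝ => ψ p.1 p.2))
    (hKdV : ∀ t ∈ I, ∀ x : ℝ, KdVexpr q t x = 0)
    (hevol : ∀ t ∈ I, ∀ x : ℝ,
      pdt ψ t x = (4 * lam + 2 * q t x) * pdx ψ t x - pdx q t x * ψ t x) :
    (∀ t ∈ I, ∀ x : ℝ,
      pdt (fun s y => -(deriv (deriv (ψ s)) y) + (q s y - lam) * ψ s y) t x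
        = (4 * lam + 2 * q t x)
            * pdx (fun s y => -(deriv (deriv (ψ s)) y) + (q s y - lam) * ψ s y) t x
          + 3 * pdx q t x * (-(deriv (deriv (ψ t)) x) + (q t x - lam) * ψ t x)) ∧
    ((∀ J : Set ℝ, IsCompact J → J ⊆ I → ∃ C : ℝ, 0 < C ∧
        ∀ t ∈ J, ∀ x : ℝ, 1 ≤ |x| → |q t x| ≤ C * |x|) →
      ∀ t' ∈ I, (∀ x : ℝ, -(deriv (deriv (ψ t')) x) + (q t' x - lam) * ψ t' x = 0) →
        ∀ t ∈ I, ∀ x : ℝ, -(deriv (deriv (ψ t)) x) + (q t x - lam) * ψ t x = 0) := by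
  have hq' : Sm q := hq.of_le (by simp)
  have hψ' : Sm ψ := hψ.of_le (by simp)
  have hPhi : ∀ s y : ℝ, -(deriv (deriv (ψ s)) y) + (q s y - lam) * ψ s y
      = Phi q ψ lam s y := by
    intro s y
    unfold Phi
    have e1 : deriv (ψ s) = fdx ψ s := funext (sm_deriv_x hψ' s)
    rw [e1, sm_deriv_x (sm_fdx hψ') s y]
  have hKdVt : ∀ t ∈ I, ∀ x : ℝ,
      fdt q t x = 6 * q t x * fdx q t x - fdx (fdx (fdx q)) t x := by
    intro t ht x
    have h := hKdV t ht x
    simp only [KdVexpr, pdt, pdx] at h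
    have e1 : deriv (q t) = fdx q t := funext (sm_deriv_x hq' t)
    have e2 : deriv (fdx q t) = fdx (fdx q) t := funext (sm_deriv_x (sm_fdx hq') t)
    rw [e1, e2, sm_deriv_x (sm_fdx (sm_fdx hq')) t x, sm_deriv_t hq' t x] at h
    linarith
  have hevolt : ∀ t ∈ I, ∀ x : ℝ,
      fdt ψ t x = (4 * lam + 2 * q t x) * fdx ψ t x - fdx q t x * ψ t x := by
    intro t ht x
    have h := hevol t ht x
    simp only [pdt, pdx] at h
    rw [sm_deriv_t hψ' t x, sm_deriv_x hψ' t x, sm_deriv_x hq' t x] at h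
    exact h
  have hpart1 : ∀ t ∈ I, ∀ x : ℝ, fdt (Phi q ψ lam) t x
      = (4 * lam + 2 * q t x) * fdx (Phi q ψ lam) t x + 3 * fdx q t x * Phi q ψ lam t x :=
    fun t ht x => part1_core q ψ lam t hq' hψ' (hKdVt t ht) (hevolt t ht) x
  have hG : (fun s y => -(deriv (deriv (ψ s)) y) + (q s y - lam) * ψ s y) = Phi q ψ lam :=
    funext fun s => funext fun y => hPhi s y
  constructor
  · intro t ht x
    rw [hG, hPhi t x]
    simp only [pdt, pdx]
    rw [sm_deriv_t (sm_Phi lam hq' hψ') t x, sm_deriv_x (sm_Phi lam hq' hψ') t x,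
      sm_deriv_x hq' t x]
    exact hpart1 t ht x
  · intro hgrow t' ht' hz0 t ht x
    rw [hPhi t x]
    have hz0' : ∀ y, Phi q ψ lam t' y = 0 := fun y => by rw [← hPhi t' y]; exact hz0 y
    set J : Set ℝ := Icc (min t' t) (max t' t) with hJdef
    have hminI : min t' t ∈ I := by
      rcases le_total t' t with h | h
      · rwa [min_eq_left h]
      · rwa [min_eq_right h]
    have hmaxI : max t' t ∈ I := by
      rcases le_total t' t with h | h
      · rwa [max_eq_right h]
      · rwa [max_eq_left h]
    have hJI : J ⊆ I := hIconn.out hminI hmaxI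
    have ht'J : t' ∈ J := ⟨min_le_left _ _, le_max_left _ _⟩
    have htJ : t ∈ J := ⟨min_le_right _ _, le_max_right _ _⟩
    obtain ⟨C, hCpos, hC⟩ := hgrow J isCompact_Icc hJI
    obtain ⟨C₁, hC₁⟩ := ((isCompact_Icc (a := min t' t) (b := max t' t)).prod
      (isCompact_Icc (a := (-1 : ℝ)) (b := (1 : ℝ)))).exists_bound_of_continuousOn
      (f := fun p : ℝ × ℝ => q p.1 p.2) (hq'.continuous.continuousOn)
    set C' : ℝ := max C C₁ + 1 with hC'def
    have hC' : 0 < C' := by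
      have := le_max_left C C₁
      rw [hC'def]; linarith
    have hqlin : ∀ s ∈ J, ∀ y : ℝ, |q s y| ≤ C' * (1 + |y|) := by
      intro s hs y
      rcases le_or_gt 1 |y| with h | h
      · have h1 := hC s hs y h
        have h2 := le_max_left C C₁
        nlinarith [abs_nonneg y, abs_nonneg (q s y)]
      · have hy : y ∈ Icc (-1 : ℝ) 1 := by
          have := abs_le.mp h.le
          exact ⟨this.1, this.2⟩
        have h1 : ‖q s y‖ ≤ C₁ := hC₁ (s, y) ⟨hs, hy⟩
        rw [Real.norm_eq_abs] at h1
        have h2 := le_max_right C C₁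
        nlinarith [abs_nonneg y, abs_nonneg (q s y)]
    set δ : ℝ := 1 / (4 * C') with hδdef
    have hδ : 0 < δ := by positivity
    have hstep := step_lemma q ψ lam I hq' hψ' hpart1 J hJI Set.ordConnected_Icc C' hC' hqlin
    have hiter : ∀ n : ℕ, ∀ u ∈ J, |u - t'| ≤ n * δ → ∀ y, Phi q ψ lam u y = 0 := by
      intro n
      induction n with
      | zero =>
        intro u hu hb y
        have h0 : |u - t'| ≤ 0 := by simpa using hb
        have : u = t' := by
          have := abs_nonpos_iff.mp h0
          linarith [sub_eq_zero.mp this]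
        rw [this]; exact hz0' y
      | succ n ih =>
        intro u hu hb y
        have hb' : |u - t'| ≤ n * δ + δ := by
          push_cast at hb; linarith
        rcases le_total t' u with h | h
        · set sm : ℝ := max t' (u - δ) with hsmdef
          have hsmu : sm ≤ u := max_le h (by linarith)
          have hsmt' : t' ≤ sm := le_max_left _ _
          have hsmJ : sm ∈ J := ⟨le_trans ht'J.1 hsmt', le_trans hsmu hu.2⟩
          have h1 : |u - sm| ≤ δ := by
            rw [abs_of_nonneg (by linarith)]
            have := le_max_right t' (u - δ)
            linarith
          have h2 : |sm - t'| ≤ n * δ := by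
            rw [abs_of_nonneg (by linarith)]
            rcases max_cases t' (u - δ) with ⟨he, _⟩ | ⟨he, _⟩
            · rw [hsmdef, he]; simp; positivity
            · rw [hsmdef, he]
              have habs : u - t' ≤ n * δ + δ := by
                rw [abs_of_nonneg (by linarith)] at hb'; linarith
              linarith
          exact hstep sm u hsmJ hu h1 (ih sm hsmJ h2) y
        · set sm : ℝ := min t' (u + δ) with hsmdef
          have hsmu : u ≤ sm := le_min h (by linarith)
          have hsmt' : sm ≤ t' := min_le_left _ _
          have hsmJ : sm ∈ J := ⟨le_trans hu.1 hsmu, le_trans hsmt' ht'J.2⟩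
          have h1 : |u - sm| ≤ δ := by
            rw [abs_of_nonpos (by linarith), neg_sub]
            have := min_le_right t' (u + δ)
            linarith
          have h2 : |sm - t'| ≤ n * δ := by
            rw [abs_of_nonpos (by linarith), neg_sub]
            rcases min_cases t' (u + δ) with ⟨he, _⟩ | ⟨he, _⟩
            · rw [hsmdef, he]; simp; positivity
            · rw [hsmdef, he]
              have habs : t' - u ≤ n * δ + δ := by
                rw [abs_of_nonpos (by linarith), neg_sub] at hb'; linarith
              linarith
          exact hstep sm u hsmJ hu h1 (ih sm hsmJ h2) y
    obtain ⟨n, hn⟩ := exists_nat_ge (|t - t'| / δ)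
    have hfin : |t - t'| ≤ n * δ := by
      rw [div_le_iff₀ hδ] at hn
      linarith
    exact hiter n t htJ hfin x
end
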